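/- arXiv:2404.15017 — 5 statements merged into one kernel-verified Lean document; each statement's English description precedes it below -/
import Mathlib

section
/- Let ε_1,…,ε_T be i.i.d. random vectors in R^p whose p coordinate time series are jointly independent (the null H_0), let X_1,…,X_T be arbitrary random vectors in R^k, let L ∈ R^{p×k} be deterministic, and set Y_t = L X_t + ε_t. Let [p] = G_1 ⊔ G_2 be a deterministic partition such that L_{G_i}ᵀ L_{G_i} is invertible for i = 1,2, let H_i = I − L_{G_i}(L_{G_i}ᵀ L_{G_i})⁻¹ L_{G_i}ᵀ, and define the estimated residuals ε̂_{t,G_i} := H_i Y_{t,G_i} for all t ∈ [T], i ∈ {1,2}. For r = 1,…,R let π_1^{(r)}, π_2^{(r)} be i.i.d. uniformly random permutations of [T], independent of all data, and let ε̃^{(r)} ∈ R^{T×p} be obtained from ε̂ by applying π_i^{(r)} to the rows of the columns in G_i, separately for i = 1,2. Then for every measurable test statistic S : R^{T×p} → R, the p-value p_val = (1 + Σ_{r=1}^R 1{S(ε̂) ≤ S(ε̃^{(r)})})/(R+1) satisfies P(p_val ≤ α) ≤ α for every α ∈ (0,1). -/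
/-!
The factor term is invisible to the test: `H_i L_{G_i} = 0`, so `ε̂ = F ε` for a fixed linear map
`F` acting within each group, and `F` commutes with group-wise row permutations. Under `H₀` with
i.i.d. rows the entries of `ε` are independent with a law depending only on the column, so the law
of `ε` is invariant under permuting the rows of each column separately, in particular under the
group-wise permutations `g = (g₁, g₂)`.

Hence the vector of statistics `(S(F ε), S(g⁽¹⁾ · F ε), …, S(g⁽ᴿ⁾ · F ε))` is exchangeable: the
substitution `ε ↦ g⁽ʲ⁾ · ε`, `g⁽ʳ⁾ ↦ (g⁽ʲ⁾)⁻¹ g⁽ʳ⁾` (`r ≠ j`), `g⁽ʲ⁾ ↦ (g⁽ʲ⁾)⁻¹` preserves the joint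
law of data and (uniform, independent) permutations and swaps the first entry with the `j`-th. For
any vector, at most `m` entries have at most `m` entries weakly above them; averaging over the
exchangeable positions gives `(R + 1) P(rank of the first entry ≤ m) ≤ m`, which is the claim with
`m = ⌊α (R + 1)⌋`.
-/

open MeasureTheory ProbabilityTheory Matrix

instance permMeasurableSpace {α : Type*} : MeasurableSpace (Equiv.Perm α) := ⊤

/-- The uniform probability measure on the permutations of a finite type. -/
noncomputable def uniformPermMeasure (α : Type*) [Fintype α] [DecidableEq α] :
    Measure (Equiv.Perm α) :=
  haveI : Nonempty (Equiv.Perm α) := ⟨1⟩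
  (PMF.uniformOfFintype (Equiv.Perm α)).toMeasure

instance {α : Type*} [Fintype α] [DecidableEq α] : IsProbabilityMeasure (uniformPermMeasure α) := by
  unfold uniformPermMeasure; infer_instance

theorem pi_uniformPermMeasure_singleton {ι α : Type*} [Fintype ι] [Fintype α] [DecidableEq α]
    (g : ι → Equiv.Perm α) :
    Measure.pi (fun _ : ι => uniformPermMeasure α) {g} =
      (Fintype.card (Equiv.Perm α) : ENNReal)⁻¹ ^ Fintype.card ι := by
  have : Nonempty (Equiv.Perm α) := ⟨1⟩
  simp [uniformPermMeasure, PMF.toMeasure_apply_singleton _ _ (MeasurableSet.of_discrete),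
    Finset.prod_const]

theorem MeasureTheory.Measure.map_perm_eq_self {α : Type*} [MeasurableSpace α] [Countable α]
    [MeasurableSingletonClass α] (ρ : Measure α) (hρ : ∀ x y, ρ {x} = ρ {y})
    (e : Equiv.Perm α) : ρ.map e = ρ :=
  Measure.ext_of_singleton fun x => by
    rw [Measure.map_apply .of_discrete (measurableSet_singleton x), ← e.image_symm_eq_preimage,
      Set.image_singleton]
    exact hρ _ _

theorem MeasureTheory.Measure.map_equiv_singleton_eq {α β : Type*} [MeasurableSpace α]
    [MeasurableSpace β] [MeasurableSingletonClass β] (ρ : Measure α) (hρ : ∀ x y, ρ {x} = ρ {y})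
    (e : α ≃ β) (he : Measurable e) (x y : β) : ρ.map e {x} = ρ.map e {y} := by
  simp only [Measure.map_apply he (measurableSet_singleton _), ← e.image_symm_eq_preimage,
    Set.image_singleton]
  exact hρ _ _

theorem MeasureTheory.Measure.map_prodMk_eq_prod_of_map_eq_prod {Ω α β γ δ : Type*}
    [MeasurableSpace Ω] [MeasurableSpace α] [MeasurableSpace β] [MeasurableSpace γ]
    [MeasurableSpace δ] (μ : Measure Ω) [IsFiniteMeasure μ] {U : Ω → α} {V : Ω → β} {W : Ω → γ}
    (hU : Measurable U) (hV : Measurable V) (hW : Measurable W) (ρ : Measure α) [SFinite ρ]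
    (h : μ.map (fun ω => (U ω, (V ω, W ω))) = ρ.prod (μ.map fun ω => (V ω, W ω)))
    {e : α → δ} (he : Measurable e) :
    μ.map (fun ω => (e (U ω), V ω)) = (ρ.map e).prod (μ.map V) := by
  have := congrArg (Measure.map (Prod.map e Prod.fst)) h
  rwa [Measure.map_map (he.prodMap measurable_fst) (by fun_prop), ← Measure.map_prod_map _ _ he
    measurable_fst, Measure.map_map measurable_fst (by fun_prop)] at this

open Finset in
theorem card_filter_card_filter_le_le {ι α : Type*} [Fintype ι] [LinearOrder α]
    (v : ι → α) (m : ℕ) : #{i | #{j | v i ≤ v j} ≤ m} ≤ m := by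
  obtain h | ⟨i₀, hi₀, hmin⟩ := (univ.filter fun i => #{j | v i ≤ v j} ≤ m).eq_empty_or_nonempty
    |>.imp id fun h => exists_min_image _ v h
  · simp [h]
  · calc #{i | #{j | v i ≤ v j} ≤ m} ≤ #{j | v i₀ ≤ v j} :=
          card_le_card fun i hi => mem_filter.2 ⟨mem_univ i, hmin i hi⟩
      _ ≤ m := (mem_filter.1 hi₀).2

section Exchangeable

open Finset ENNReal

variable {R : ℕ} (Q : Measure (Fin (R + 1) → ℝ))

theorem measurableSet_card_filter_le (s : Fin (R + 1)) (m : ℕ) :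
    MeasurableSet {v : Fin (R + 1) → ℝ | #{s' | v s ≤ v s'} ≤ m} := by
  have : Measurable fun v : Fin (R + 1) → ℝ => #{s' | v s ≤ v s'} := by
    simp_rw [card_filter]
    exact Finset.measurable_sum _ fun s' _ =>
      Measurable.ite (measurableSet_le (measurable_pi_apply s) (measurable_pi_apply s'))
        measurable_const measurable_const
  exact this (MeasurableSet.of_discrete (s := Set.Iic m))

theorem measure_card_filter_le_eq (hQ : ∀ s, Q.map (· ∘ Equiv.swap 0 s) = Q)
    (s : Fin (R + 1)) (m : ℕ) :
    Q {v | #{s' | v s ≤ v s'} ≤ m} = Q {v | #{s' | v 0 ≤ v s'} ≤ m} := by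
  have hpre : (· ∘ Equiv.swap 0 s) ⁻¹' {v : Fin (R + 1) → ℝ | #{s' | v 0 ≤ v s'} ≤ m} =
      {v | #{s' | v s ≤ v s'} ≤ m} := by
    ext v
    simp only [Set.mem_preimage, Set.mem_ofPred_eq, Function.comp_apply, Equiv.swap_apply_left]
    rw [card_filter, card_filter,
      Equiv.sum_comp (Equiv.swap 0 s) (fun s' => if v s ≤ v s' then 1 else 0)]
  rw [← hpre, ← Measure.map_apply (by fun_prop) (measurableSet_card_filter_le 0 m), hQ]

theorem mul_measure_card_filter_le [IsProbabilityMeasure Q]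
    (hQ : ∀ s, Q.map (· ∘ Equiv.swap 0 s) = Q) (m : ℕ) :
    (R + 1 : ℝ≥0∞) * Q {v | #{s | v 0 ≤ v s} ≤ m} ≤ m := by
  set A : Fin (R + 1) → Set (Fin (R + 1) → ℝ) := fun s => {v | #{s' | v s ≤ v s'} ≤ m}
  have hA := fun s => measurableSet_card_filter_le (R := R) s m
  calc (R + 1 : ℝ≥0∞) * Q (A 0) = ∑ s, Q (A s) := by
        simp only [A, measure_card_filter_le_eq Q hQ, sum_const, card_univ, Fintype.card_fin,
          nsmul_eq_mul, Nat.cast_add, Nat.cast_one]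
    _ = ∫⁻ v, ∑ s, (A s).indicator 1 v ∂Q := by
        rw [lintegral_finsetSum _ fun s _ => measurable_one.indicator (hA s)]
        simp [A, lintegral_indicator_one (hA _)]
    _ ≤ ∫⁻ _, (m : ℝ≥0∞) ∂Q := lintegral_mono fun v => by
        simp only [Set.indicator_apply, Pi.one_apply, sum_boole]
        exact_mod_cast card_filter_card_filter_le_le v m
    _ = m := by simp

theorem measure_pvalue_le [IsProbabilityMeasure Q] (hQ : ∀ s, Q.map (· ∘ Equiv.swap 0 s) = Q)
    {α : ℝ} (hα : 0 ≤ α) :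
    Q {v | (∑ s, if v 0 ≤ v s then (1 : ℝ) else 0) / (R + 1) ≤ α} ≤ ENNReal.ofReal α := by
  set m := ⌊α * (R + 1)⌋₊
  have hsub : {v : Fin (R + 1) → ℝ | (∑ s, if v 0 ≤ v s then (1 : ℝ) else 0) / (R + 1) ≤ α} ⊆
      {v | #{s | v 0 ≤ v s} ≤ m} := fun v hv => by
    simp only [Set.mem_ofPred_eq, ← natCast_card_filter] at hv ⊢
    exact Nat.le_floor ((div_le_iff₀ (by positivity)).1 hv)
  have hm : (m : ℝ≥0∞) ≤ (R + 1 : ℝ≥0∞) * ENNReal.ofReal α := by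
    rw [← ofReal_natCast, ← ofReal_natCast R, ← ofReal_one,
      ← ofReal_add (by positivity) zero_le_one, ← ofReal_mul (by positivity), mul_comm]
    exact ofReal_le_ofReal (Nat.floor_le (by positivity))
  refine (measure_mono hsub).trans ?_
  refine (ENNReal.mul_le_mul_iff_right (a := R + 1) (by simp) (by simp)).1 ?_
  exact (mul_measure_card_filter_le Q hQ m).trans hm

end Exchangeable

section Randomization

variable {G E : Type*} {R : ℕ}

def randomizationValues (a : G → E → E) (f : E → ℝ) (w : (Fin R → G) × E) : Fin (R + 1) → ℝ :=
  Fin.cons (f w.2) fun r => f (a (w.1 r) w.2)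

variable [MeasurableSpace G] [Countable G] [MeasurableSingletonClass G] [MeasurableSpace E]

theorem measurable_randomizationValues {a : G → E → E} (ha_meas : ∀ g, Measurable (a g))
    {f : E → ℝ} (hf : Measurable f) : Measurable (randomizationValues (R := R) a f) :=
  measurable_from_prod_countable_right fun g => by
    refine measurable_pi_iff.2 fun s => ?_
    induction s using Fin.cases with
    | zero => exact hf
    | succ r => exact hf.comp (ha_meas (g r))

end Randomization

section GroupRandomization

variable {G E : Type*} [Group G] {R : ℕ}

def drawsRebase (j : Fin R) (g : Fin R → G) : Fin R → G :=
  fun r => (g j)⁻¹ * if r = j then 1 else g r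

theorem drawsRebase_involutive (j : Fin R) : Function.Involutive (drawsRebase (G := G) j) := by
  intro g
  funext r
  by_cases h : r = j
  · subst h; simp [drawsRebase]
  · simp [drawsRebase, h]

-- `a` is a right action (see `ha_mul` below), as precomposition by row permutations is.
variable {a : G → E → E}

theorem randomizationValues_rebase (ha_one : ∀ z, a 1 z = z)
    (ha_mul : ∀ g h z, a h (a g z) = a (g * h) z) (f : E → ℝ) (j : Fin R)
    (w : (Fin R → G) × E) :
    randomizationValues a f (drawsRebase j w.1, a (w.1 j) w.2) =
      randomizationValues a f w ∘ Equiv.swap 0 j.succ := by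
  funext s
  induction s using Fin.cases with
  | zero => simp [randomizationValues]
  | succ r =>
    by_cases h : r = j
    · subst h; simp [randomizationValues, drawsRebase, ha_mul, ha_one]
    · rw [Function.comp_apply, Equiv.swap_apply_of_ne_of_ne (Fin.succ_ne_zero r)
        (Fin.succ_injective _ |>.ne h)]
      simp [randomizationValues, drawsRebase, h, ha_mul]

variable [MeasurableSpace G] [Countable G] [MeasurableSingletonClass G] [MeasurableSpace E]

theorem measurePreserving_drawsRebase (ρ : Measure (Fin R → G)) [SFinite ρ]
    (hρ : ∀ g g', ρ {g} = ρ {g'}) (ν : Measure E) [SFinite ν] (ha_meas : ∀ g, Measurable (a g))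
    (hν : ∀ g, ν.map (a g) = ν) (j : Fin R) :
    MeasurePreserving (fun w : (Fin R → G) × E => (drawsRebase j w.1, a (w.1 j) w.2))
      (ρ.prod ν) (ρ.prod ν) :=
  MeasurePreserving.skew_product (g := fun g => a (g j))
    ⟨.of_discrete, ρ.map_perm_eq_self hρ (drawsRebase_involutive j).toPerm⟩
    (measurable_from_prod_countable_right fun g => ha_meas (g j)) (ae_of_all _ fun g => hν (g j))

theorem map_randomizationValues_comp_swap (ρ : Measure (Fin R → G)) [SFinite ρ]
    (hρ : ∀ g g', ρ {g} = ρ {g'}) (ν : Measure E) [SFinite ν] (ha_meas : ∀ g, Measurable (a g))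
    (ha_one : ∀ z, a 1 z = z) (ha_mul : ∀ g h z, a h (a g z) = a (g * h) z)
    (hν : ∀ g, ν.map (a g) = ν) {f : E → ℝ} (hf : Measurable f) (s : Fin (R + 1)) :
    ((ρ.prod ν).map (randomizationValues a f)).map (· ∘ Equiv.swap 0 s) =
      (ρ.prod ν).map (randomizationValues a f) := by
  have hV := measurable_randomizationValues (R := R) ha_meas hf
  rw [Measure.map_map (by fun_prop) hV]
  induction s using Fin.cases with
  | zero => simp only [Equiv.swap_self, Equiv.coe_refl, Function.comp_id]; rfl
  | succ j =>
    have hT := measurePreserving_drawsRebase ρ hρ ν ha_meas hν j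
    rw [show (· ∘ Equiv.swap 0 j.succ) ∘ randomizationValues a f = randomizationValues a f ∘ _
      from funext fun w => (randomizationValues_rebase ha_one ha_mul f j w).symm,
      ← Measure.map_map hV hT.measurable, hT.map_eq]

theorem randomization_test_valid {Ω : Type*} [MeasurableSpace Ω] (μ : Measure Ω)
    (D : Ω → Fin R → G) (Z : Ω → E) (hDZ : AEMeasurable (fun ω => (D ω, Z ω)) μ)
    (ρ : Measure (Fin R → G)) [IsProbabilityMeasure ρ] (hρ : ∀ g g', ρ {g} = ρ {g'})
    (ν : Measure E) [IsProbabilityMeasure ν] (hlaw : μ.map (fun ω => (D ω, Z ω)) = ρ.prod ν)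
    (ha_meas : ∀ g, Measurable (a g)) (ha_one : ∀ z, a 1 z = z)
    (ha_mul : ∀ g h z, a h (a g z) = a (g * h) z) (hν : ∀ g, ν.map (a g) = ν)
    {f : E → ℝ} (hf : Measurable f) {α : ℝ} (hα : 0 ≤ α) :
    μ {ω | (1 + ∑ r : Fin R, if f (Z ω) ≤ f (a (D ω r) (Z ω)) then (1 : ℝ) else 0) / (R + 1) ≤ α}
      ≤ ENNReal.ofReal α := by
  have hV := measurable_randomizationValues (R := R) ha_meas hf
  have : IsProbabilityMeasure ((ρ.prod ν).map (randomizationValues a f)) :=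
    Measure.isProbabilityMeasure_map hV.aemeasurable
  set pval := {v : Fin (R + 1) → ℝ | (∑ s, if v 0 ≤ v s then (1 : ℝ) else 0) / (R + 1) ≤ α}
  calc _ = μ ((fun ω => (D ω, Z ω)) ⁻¹' (randomizationValues a f ⁻¹' pval)) := by
        simp only [pval, Set.preimage_ofPred_eq, randomizationValues, Fin.sum_univ_succ,
          Fin.cons_zero, Fin.cons_succ, le_refl, if_true]
    _ ≤ (ρ.prod ν) (randomizationValues a f ⁻¹' pval) := hlaw ▸ Measure.le_map_apply hDZ _
    _ ≤ _ := Measure.le_map_apply hV.aemeasurable _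
    _ ≤ _ := measure_pvalue_le _
        (map_randomizationValues_comp_swap ρ hρ ν ha_meas ha_one ha_mul hν hf) hα

end GroupRandomization

def permWithinCols {τ ι β : Type*} (σ : ι → Equiv.Perm τ) (m : τ → ι → β) : τ → ι → β :=
  fun t j => m (σ j t) j

theorem measurable_permWithinCols {τ ι β : Type*} [MeasurableSpace β] (σ : ι → Equiv.Perm τ) :
    Measurable (permWithinCols (β := β) σ) := by
  unfold permWithinCols; fun_prop

theorem map_comp_perm_pi_eq {τ β : Type*} [Fintype τ] [MeasurableSpace β] (m : τ → Measure β)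
    [∀ t, SigmaFinite (m t)] (hm : ∀ t t', m t = m t') (σ : Equiv.Perm τ) :
    (Measure.pi m).map (fun v t => v (σ t)) = Measure.pi m :=
  (measurePreserving_arrowCongr' m m σ.symm (MeasurableEquiv.refl β)
    fun t => hm (σ.symm t) t ▸ .id _).map_eq

theorem map_permWithinCols_eq {Ω τ ι β : Type*} [MeasurableSpace Ω] [MeasurableSpace β]
    [Fintype τ] [Fintype ι] (μ : Measure Ω) [IsProbabilityMeasure μ] (ε : Ω → τ → ι → β)
    (hε : Measurable ε) (hrow_indep : iIndepFun (fun t ω => ε ω t) μ)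
    (hrow_ident : ∀ t t', μ.map (fun ω => ε ω t) = μ.map (fun ω => ε ω t'))
    (hcol_indep : iIndepFun (fun j ω t => ε ω t j) μ) (σ : ι → Equiv.Perm τ) :
    (μ.map ε).map (permWithinCols σ) = μ.map ε := by
  set col : Ω → ι → τ → β := fun ω j t => ε ω t j
  set untranspose : (ι → τ → β) → τ → ι → β := fun M t j => M j t
  have hcol : Measurable col := by fun_prop
  have hU : Measurable untranspose := by fun_prop
  have hentry_ident : ∀ j t t', μ.map (fun ω => ε ω t j) = μ.map (fun ω => ε ω t' j) :=
    fun j t t' => by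
      have hrow : ∀ t, Measurable fun ω => ε ω t := fun t => by fun_prop
      have h := congrArg (Measure.map (· j)) (hrow_ident t t')
      rwa [Measure.map_map (measurable_pi_apply j) (hrow t),
        Measure.map_map (measurable_pi_apply j) (hrow t')] at h
  have hlaw : μ.map col = Measure.pi fun j => Measure.pi fun t => μ.map fun ω => ε ω t j := by
    rw [(iIndepFun_iff_map_fun_eq_pi_map fun j => by fun_prop).1 hcol_indep]
    congr 1; funext j
    exact (iIndepFun_iff_map_fun_eq_pi_map fun t => by fun_prop).1
      (hrow_indep.comp (fun _ x => x j) fun _ => measurable_pi_apply j)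
  have hcolPerm : (μ.map col).map (fun M j t => M j (σ j t)) = μ.map col := by
    rw [hlaw]
    exact (measurePreserving_pi _ _ fun j =>
      ⟨by fun_prop, map_comp_perm_pi_eq _ (hentry_ident j) (σ j)⟩).map_eq
  have hε_eq : ε = untranspose ∘ col := rfl
  rw [hε_eq, ← Measure.map_map hU hcol, Measure.map_map (measurable_permWithinCols σ) hU,
    show permWithinCols σ ∘ untranspose = untranspose ∘ fun M j t => M j (σ j t) from rfl,
    ← Measure.map_map hU (by fun_prop), hcolPerm]

theorem Matrix.one_sub_mul_inv_mul_transpose_mul_self {m n R : Type*} [Fintype m] [Fintype n]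
    [DecidableEq m] [DecidableEq n] [CommRing R] (A : Matrix m n R) (hA : IsUnit (Aᵀ * A).det) :
    (1 - A * (Aᵀ * A)⁻¹ * Aᵀ) * A = 0 := by
  rw [Matrix.sub_mul, Matrix.one_mul, Matrix.mul_assoc, Matrix.mul_assoc,
    Matrix.nonsing_inv_mul _ hA, Matrix.mul_one, sub_self]

section BlockMul

variable {τ ι κ : Type*} [Fintype ι] [DecidableEq κ] (grp : ι → κ)
  (H : (i : κ) → Matrix {j // grp j = i} {j // grp j = i} ℝ)

def blockMul (m : τ → ι → ℝ) : τ → ι → ℝ :=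
  fun t j => ∑ j' : {x // grp x = grp j}, H (grp j) ⟨j, rfl⟩ j' * m t j'.1

theorem measurable_blockMul : Measurable (blockMul (τ := τ) grp H) := by
  unfold blockMul; fun_prop

theorem blockMul_permWithinCols (g : κ → Equiv.Perm τ) (m : τ → ι → ℝ) :
    blockMul grp H (permWithinCols (fun j => g (grp j)) m) =
      permWithinCols (fun j => g (grp j)) (blockMul grp H m) := by
  funext t j
  refine Finset.sum_congr rfl fun j' _ => ?_
  simp only [permWithinCols, j'.2]

theorem blockMul_factor_add {k : Type*} [Fintype k] (L : Matrix ι k ℝ)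
    (Lsub : (i : κ) → Matrix {j // grp j = i} k ℝ) (hLsub : ∀ i j a, Lsub i j a = L j.1 a)
    (hHL : ∀ i, H i * Lsub i = 0) (x : τ → k → ℝ) (e : τ → ι → ℝ) :
    blockMul grp H (fun t j => (∑ a, L j a * x t a) + e t j) = blockMul grp H e := by
  funext t j
  have hfactor : (H (grp j) *ᵥ (Lsub (grp j) *ᵥ x t)) ⟨j, rfl⟩ = 0 := by
    rw [mulVec_mulVec, hHL, zero_mulVec, Pi.zero_apply]
  simp only [blockMul, mul_add, Finset.sum_add_distrib, add_eq_right]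
  simpa [mulVec, dotProduct, hLsub] using hfactor

end BlockMul

/-- **validity of the two-group mosaic permutation test.** Let
`Y t = L (X t) + ε t` where the `ε t` are i.i.d. random vectors in `ℝ^p` with jointly
independent coordinate time series (`H₀`), `X t ∈ ℝ^k` arbitrary, `L` deterministic.
Partition `[p] = G₁ ⊔ G₂` (via group labels `grp`), form the per-group OLS projections
`H i = I − L_{G_i}(L_{G_i}ᵀ L_{G_i})⁻¹ L_{G_i}ᵀ`, the estimated residuals
`ε̂_{t,G_i} = H_i Y_{t,G_i}`, and for `r = 1, …, R` the group-wise row-permuted matrices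
`ε̃⁽ʳ⁾` built from i.i.d. uniformly random permutations independent of the data. Then for
every measurable statistic `S`, `p_val = (1 + ∑ᵣ 1{S(ε̂) ≤ S(ε̃⁽ʳ⁾)})/(R+1)` satisfies
`P(p_val ≤ α) ≤ α` for every `α ∈ (0,1)`. -/
theorem two_group_mosaic_permutation_test_valid
    {Ω : Type*} [MeasurableSpace Ω] (μ : Measure Ω) [IsProbabilityMeasure μ]
    (T p k R : ℕ)
    (ε : Ω → Fin T → Fin p → ℝ) (hεmeas : Measurable ε)
    -- the rows `ε t` are i.i.d.:
    (hrow_indep : iIndepFun (fun t ω => ε ω t) μ)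
    (hrow_ident : ∀ t t' : Fin T, Measure.map (fun ω => ε ω t) μ = Measure.map (fun ω => ε ω t') μ)
    -- `H₀`: the columns `ε_{·,j}` are jointly independent:
    (hcol_indep : iIndepFun (fun j ω => fun t => ε ω t j) μ)
    -- arbitrary unobserved factor returns and deterministic exposures:
    (X : Ω → Fin T → Fin k → ℝ) (hXmeas : Measurable X)
    (L : Matrix (Fin p) (Fin k) ℝ)
    -- the observed returns `Y t = L (X t) + ε t`:
    (Y : Ω → Fin T → Fin p → ℝ)
    (hY : ∀ ω t j, Y ω t j = (∑ a : Fin k, L j a * X ω t a) + ε ω t j)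
    -- the deterministic partition `[p] = G₁ ⊔ G₂` encoded by group labels:
    (grp : Fin p → Fin 2)
    -- the submatrices `L_{G_i}`, with `L_{G_i}ᵀ L_{G_i}` invertible:
    (Lsub : (i : Fin 2) → Matrix {j : Fin p // grp j = i} (Fin k) ℝ)
    (hLsub : ∀ i (j : {j : Fin p // grp j = i}) a, Lsub i j a = L j.1 a)
    (hLinv : ∀ i, IsUnit ((Lsub i)ᵀ * Lsub i).det)
    -- the OLS projections `H i = I − L_{G_i}(L_{G_i}ᵀ L_{G_i})⁻¹ L_{G_i}ᵀ`:
    (H : (i : Fin 2) → Matrix {j : Fin p // grp j = i} {j : Fin p // grp j = i} ℝ)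
    (hH : ∀ i, H i = 1 - Lsub i * ((Lsub i)ᵀ * Lsub i)⁻¹ * (Lsub i)ᵀ)
    -- the estimated residuals `ε̂_{t,G_i} := H_i Y_{t,G_i}`:
    (εh : Ω → Fin T → Fin p → ℝ)
    (hεh : ∀ ω t (j : Fin p), εh ω t j =
      ∑ j' : {x : Fin p // grp x = grp j}, H (grp j) ⟨j, rfl⟩ j' * Y ω t j'.1)
    -- i.i.d. uniformly random permutations `π i r` of `[T]`, independent of all the data:
    (π : Fin 2 → Fin R → Ω → Equiv.Perm (Fin T))
    (hπmeas : ∀ i r, Measurable (π i r))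
    (hπ : Measure.map
        (fun ω => ((fun ir : Fin 2 × Fin R => π ir.1 ir.2 ω), (ε ω, X ω))) μ =
      (Measure.pi fun _ : Fin 2 × Fin R => uniformPermMeasure (Fin T)).prod
        (Measure.map (fun ω => (ε ω, X ω)) μ))
    -- the group-wise permuted residual matrices `ε̃⁽ʳ⁾`:
    (εt : Fin R → Ω → Fin T → Fin p → ℝ)
    (hεt : ∀ (r : Fin R) ω, εt r ω = fun t j => εh ω (π (grp j) r ω t) j)
    -- an arbitrary measurable test statistic:
    (S : (Fin T → Fin p → ℝ) → ℝ) (hS : Measurable S) :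
    ∀ α ∈ Set.Ioo (0 : ℝ) 1,
      μ {ω | (1 + ∑ r : Fin R, if S (εh ω) ≤ S (εt r ω) then (1 : ℝ) else 0) / (R + 1) ≤ α}
        ≤ ENNReal.ofReal α := by
  intro α hα
  have hresid : ∀ ω, εh ω = blockMul grp H (ε ω) := fun ω => by
    have hHL : ∀ i, H i * Lsub i = 0 := fun i =>
      hH i ▸ (Lsub i).one_sub_mul_inv_mul_transpose_mul_self (hLinv i)
    rw [← blockMul_factor_add grp H L Lsub hLsub hHL (X ω), ← funext₂ (hY ω)]
    exact funext₂ (hεh ω)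
  let curryDraws : (Fin 2 × Fin R → Equiv.Perm (Fin T)) ≃ (Fin R → Fin 2 → Equiv.Perm (Fin T)) :=
    ⟨fun g r i => g (i, r), fun h ir => h ir.2 ir.1, fun _ => rfl, fun _ => rfl⟩
  set ρ := (Measure.pi fun _ : Fin 2 × Fin R => uniformPermMeasure (Fin T)).map curryDraws
  have hρ : ∀ g g', ρ {g} = ρ {g'} := Measure.map_equiv_singleton_eq _
    (fun _ _ => by simp only [pi_uniformPermMeasure_singleton]) _ .of_discrete
  have : IsProbabilityMeasure ρ :=
    Measure.isProbabilityMeasure_map Measurable.of_discrete.aemeasurable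
  have : IsProbabilityMeasure (μ.map ε) := Measure.isProbabilityMeasure_map hεmeas.aemeasurable
  have hlaw : μ.map (fun ω => (fun r i => π i r ω, ε ω)) = ρ.prod (μ.map ε) :=
    Measure.map_prodMk_eq_prod_of_map_eq_prod μ (by fun_prop) hεmeas hXmeas _ hπ
      (e := curryDraws) .of_discrete
  have hν : ∀ g : Fin 2 → Equiv.Perm (Fin T),
      (μ.map ε).map (permWithinCols fun j => g (grp j)) = μ.map ε := fun g =>
    map_permWithinCols_eq μ ε hεmeas hrow_indep hrow_ident hcol_indep _
  have hεt' : ∀ r ω, εt r ω = blockMul grp H (permWithinCols (fun j => π (grp j) r ω) (ε ω)) :=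
    fun r ω => hεt r ω ▸ hresid ω ▸ (blockMul_permWithinCols grp H (fun i => π i r ω) (ε ω)).symm
  simpa only [hεt', hresid, Function.comp_apply] using
    randomization_test_valid μ (fun ω r i => π i r ω) ε (by fun_prop) ρ hρ (μ.map ε) hlaw
      (fun _ => measurable_permWithinCols _) (fun _ => rfl) (fun _ _ _ => rfl) hν
      (hS.comp (measurable_blockMul grp H)) hα.1.le
end

section
/- In the setting of the mosaic permutation test (deterministic tiling {(B_m,G_m)}_{m=1}^M, ε satisfying H_0 and local exchangeability with respect to the tiling, deterministic matrices H_m ∈ R^{|G_m|×|G_m|}, mosaic residuals ε̃^{(0)} := ε̂ defined by ε̂_{B_m,G_m} = ε_{(m)} H_m, and permuted residuals ε̃^{(r)}_{B_m,G_m} = P_m^{(r)} ε_{(m)} H_m for i.i.d. uniformly random permutation matrices P_m^{(r)} independent of ε, r = 1,…,R), let f : (R^{T×p})^{R+1} → R be any measurable 'meta test-statistic'. Let π_1,…,π_K be i.i.d. uniformly random permutations of {0,1,…,R}, independent of everything else. Then the adaptive p-value p_adaptive = (1 + Σ_{ℓ=1}^K 1{ f(ε̃^{(0)},…,ε̃^{(R)})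 ≤ f(ε̃^{(π_ℓ(0))},…,ε̃^{(π_ℓ(R))}) })/(K+1) satisfies P(p_adaptive ≤ α) ≤ α for every α ∈ (0,1). -/
open MeasureTheory ProbabilityTheory

/-!
Under `H₀` and local exchangeability the law of `ε` is invariant under every family of
within-tile row permutations, since the columns are independent and each column is only
permuted within its tiles. The residual map `ε ↦ ε̂` mixes columns inside a tile only, so it
commutes with such permutations. Hence reordering the rounds `0, …, R` by a permutation `g` is
the change of variables that permutes `ε` by the permutations of round `g 0` and renormalises
all permutations by them, and this change of variables preserves the joint law: the tuple
`(ε̃⁽⁰⁾, …, ε̃⁽ᴿ⁾)` is exchangeable.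

So left-multiplying `(1, π₁, …, π_K)` by an independent uniform `g₀` does not change the
probability that `p_adaptive ≤ α`, and turns it into `K + 1` independent uniform permutations
`σ₀, …, σ_K`. For fixed data, at most an `α`-fraction of all such tuples satisfy
`p_adaptive ≤ α`. By symmetry in the `σᵢ` this follows from a count for a single real vector:
if `S` is the set of coordinates `i` such that at most `c` coordinates are `≥ xᵢ`, then the
smallest coordinate in `S` has all of `S` above it, so `|S| ≤ c`.
-/

open scoped ENNReal
open Finset

instance (α : Type*) [Fintype α] [DecidableEq α] :
    IsProbabilityMeasure (uniformPermMeasure α) := by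
  unfold uniformPermMeasure
  infer_instance

noncomputable def adaptivePValue {K : ℕ} (y₀ : ℝ) (y : Fin K → ℝ) : ℝ :=
  (1 + ∑ l, if y₀ ≤ y l then (1 : ℝ) else 0) / (K + 1)

noncomputable def upperRank {ι : Type*} [Fintype ι] (u : ι → ℝ) (i : ι) : ℕ :=
  #{i' | u i ≤ u i'}

lemma upperRank_comp_perm {ι : Type*} [Fintype ι] (u : ι → ℝ) (e : Equiv.Perm ι) (i : ι) :
    upperRank (u ∘ e) i = upperRank u (e i) :=
  card_equiv e fun _ => by simp

lemma card_upperRank_le {ι : Type*} [Fintype ι] (u : ι → ℝ) {c : ℝ} (hc : 0 ≤ c) :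
    (#{i | (upperRank u i : ℝ) ≤ c} : ℝ) ≤ c := by
  set S : Finset ι := {i | (upperRank u i : ℝ) ≤ c}
  rcases S.eq_empty_or_nonempty with hS | hS
  · simpa [hS] using hc
  obtain ⟨i₀, hi₀, hmin⟩ := S.exists_min_image u hS
  have hsub : S ⊆ ({i' | u i₀ ≤ u i'} : Finset ι) := fun i hi => by simpa using hmin i hi
  calc (#S : ℝ) ≤ upperRank u i₀ := by exact_mod_cast card_le_card hsub
    _ ≤ c := (mem_filter.1 hi₀).2

lemma adaptivePValue_eq_upperRank {K : ℕ} (u : Fin (K + 1) → ℝ) :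
    adaptivePValue (u 0) (fun l => u l.succ) = upperRank u 0 / (K + 1) := by
  rw [adaptivePValue, upperRank, card_filter, Fin.sum_univ_succ]
  simp

lemma card_adaptivePValue_le {Γ : Type*} [Fintype Γ] {K : ℕ} (w : Γ → ℝ) {α : ℝ}
    (hα : 0 ≤ α) :
    (#{s : Fin (K + 1) → Γ | adaptivePValue (w (s 0)) (fun l => w (s l.succ)) ≤ α} : ℝ)
      ≤ α * Fintype.card Γ ^ (K + 1) := by
  set c : ℝ := α * (K + 1)
  let rankLe (s : Fin (K + 1) → Γ) (i : Fin (K + 1)) : ℝ :=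
    if (upperRank (w ∘ s) i : ℝ) ≤ c then 1 else 0
  have hcond : ∀ s : Fin (K + 1) → Γ,
      adaptivePValue (w (s 0)) (fun l => w (s l.succ)) ≤ α ↔ (upperRank (w ∘ s) 0 : ℝ) ≤ c :=
    fun s => by
      have h := adaptivePValue_eq_upperRank (w ∘ s)
      simp only [Function.comp_apply] at h
      rw [h, div_le_iff₀ (by positivity)]
  -- every coordinate `i` plays the role of `0` after relabelling the coordinates by `swap 0 i`
  have hsymm : ∀ i, ∑ s, rankLe s i = ∑ s, rankLe s 0 := fun i =>
    Fintype.sum_equiv ((Equiv.swap 0 i).arrowCongr (Equiv.refl Γ)) _ _ fun s => by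
      simp only [rankLe]
      rw [← Equiv.swap_apply_left 0 i, ← upperRank_comp_perm]
      rfl
  have hcount : (#{s : Fin (K + 1) → Γ |
      adaptivePValue (w (s 0)) (fun l => w (s l.succ)) ≤ α} : ℝ) = ∑ s, rankLe s 0 := by
    rw [card_filter, Nat.cast_sum]
    exact sum_congr rfl fun s _ => by simp only [rankLe, hcond s]; split_ifs <;> simp
  have hrow : ∀ s, ∑ i, rankLe s i ≤ c := fun s => by
    have := card_upperRank_le (w ∘ s) (c := c) (by positivity)
    simpa only [card_filter, Nat.cast_sum, Nat.cast_ite, Nat.cast_one, Nat.cast_zero] using this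
  have hK : (0 : ℝ) < K + 1 := by positivity
  rw [hcount, ← mul_le_mul_iff_left₀ hK]
  calc (∑ s, rankLe s 0) * (K + 1) = ∑ i, ∑ s, rankLe s i := by simp [hsymm]; ring
    _ = ∑ s, ∑ i, rankLe s i := sum_comm
    _ ≤ ∑ _s : Fin (K + 1) → Γ, c := sum_le_sum fun s _ => hrow s
    _ = α * Fintype.card Γ ^ (K + 1) * (K + 1) := by simp [c]; ring

lemma sum_eq_card_smul_sum_cons_one {Γ M : Type*} [Group Γ] [Fintype Γ] [AddCommMonoid M] {K : ℕ}
    (F : (Fin (K + 1) → Γ) → M) (hF : ∀ g s, F (fun i => g * s i) = F s) :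
    ∑ s, F s = Fintype.card Γ • ∑ τ : Fin K → Γ, F (Fin.cons 1 τ) := by
  have hcons : ∀ a (τ : Fin K → Γ), F (Fin.cons a τ) = F (Fin.cons 1 fun l => a⁻¹ * τ l) :=
    fun a τ => by
      rw [← hF a⁻¹]
      congr 1
      funext i
      cases i using Fin.cases <;> simp
  calc ∑ s, F s = ∑ p : Γ × (Fin K → Γ), F (Fin.cons p.1 p.2) :=
        ((Fin.consEquiv fun _ => Γ).sum_comp F).symm
    _ = ∑ a : Γ, ∑ τ : Fin K → Γ, F (Fin.cons 1 τ) := by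
        rw [Fintype.sum_prod_type]
        refine sum_congr rfl fun a _ => ?_
        simp only [hcons a]
        exact (Equiv.piCongrRight fun _ => Equiv.mulLeft a⁻¹).sum_comp fun τ => F (Fin.cons 1 τ)
    _ = Fintype.card Γ • ∑ τ : Fin K → Γ, F (Fin.cons 1 τ) := by
        rw [sum_const, card_univ]

open Classical in
lemma sum_measure_le_of_forall_card_le {ι X : Type*} [Fintype ι] [MeasurableSpace X]
    (ν : Measure X) {A : ι → Set X} (hA : ∀ i, MeasurableSet (A i)) {c : ℝ≥0∞}
    (hc : ∀ x, (#{i | x ∈ A i} : ℝ≥0∞) ≤ c) :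
    ∑ i, ν (A i) ≤ c * ν Set.univ := by
  calc ∑ i, ν (A i) = ∫⁻ x, ∑ i, (A i).indicator 1 x ∂ν := by
        rw [lintegral_finsetSum _ fun i _ => measurable_one.indicator (hA i)]
        simp [lintegral_indicator_one (hA _)]
    _ = ∫⁻ x, (#{i | x ∈ A i} : ℝ≥0∞) ∂ν := by
        congr 1
        funext x
        rw [card_filter, Nat.cast_sum]
        simp [Set.indicator_apply]
    _ ≤ ∫⁻ _, c ∂ν := lintegral_mono hc
    _ = c * ν Set.univ := lintegral_const c

lemma measurable_prod_of_countable_fst {α β γ : Type*} [MeasurableSpace α] [MeasurableSpace β]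
    [MeasurableSpace γ] [Countable α] [MeasurableSingletonClass α] {f : α × β → γ}
    (hf : ∀ a, Measurable fun b => f (a, b)) : Measurable f :=
  (measurable_from_prod_countable_left (f := f ∘ Prod.swap) hf).comp measurable_swap

lemma measurableSet_adaptivePValue_le {X : Type*} [MeasurableSpace X] {K : ℕ} {y₀ : X → ℝ}
    {y : X → Fin K → ℝ} (hy₀ : Measurable y₀) (hy : Measurable y) (α : ℝ) :
    MeasurableSet {x | adaptivePValue (y₀ x) (y x) ≤ α} := by
  unfold adaptivePValue
  refine measurableSet_le (Measurable.div_const (measurable_const.add <|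
    Finset.measurable_sum _ fun l _ => Measurable.ite ?_ measurable_const measurable_const) _)
    measurable_const
  exact measurableSet_le hy₀ ((measurable_pi_apply l).comp hy)

lemma pi_uniformOfFintype_singleton {ι : Type*} [Fintype ι] {β : ι → Type*}
    [∀ i, Fintype (β i)] [∀ i, Nonempty (β i)] [∀ i, MeasurableSpace (β i)]
    [∀ i, MeasurableSingletonClass (β i)] (b : ∀ i, β i) :
    Measure.pi (fun i => (PMF.uniformOfFintype (β i)).toMeasure) {b}
      = ∏ i, (Fintype.card (β i) : ℝ≥0∞)⁻¹ := by
  rw [← Set.univ_pi_singleton, Measure.pi_pi]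
  exact prod_congr rfl fun i _ => by
    rw [PMF.toMeasure_apply_singleton _ _ (measurableSet_singleton _), PMF.uniformOfFintype_apply]

lemma measurePreserving_of_measure_singleton_eq {A : Type*} [MeasurableSpace A] [Countable A]
    [MeasurableSingletonClass A] {μ : Measure A} {c : ℝ≥0∞} (hμ : ∀ a, μ {a} = c)
    (e : A ≃ A) : MeasurePreserving e μ μ where
  measurable := measurable_of_countable _
  map_eq := Measure.ext_of_singleton fun a => by
    rw [Measure.map_apply (measurable_of_countable _) (measurableSet_singleton a),
      show e ⁻¹' {a} = {e.symm a} by ext; simp [← Equiv.eq_symm_apply], hμ, hμ]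

lemma sum_measure_adaptivePValue_le {Γ X : Type*} [Fintype Γ] [MeasurableSpace X] {K : ℕ}
    (ν : Measure X) [IsProbabilityMeasure ν] (v : X → Γ → ℝ)
    (hv : ∀ σ, Measurable fun x => v x σ) {α : ℝ} (hα : 0 ≤ α) :
    ∑ s : Fin (K + 1) → Γ, ν {x | adaptivePValue (v x (s 0)) (fun l => v x (s l.succ)) ≤ α}
      ≤ ENNReal.ofReal α * Fintype.card Γ ^ (K + 1) := by
  refine (sum_measure_le_of_forall_card_le ν (fun s => measurableSet_adaptivePValue_le (hv _)
    (measurable_pi_lambda _ fun _ => hv _) α) fun x => ?_).trans_eq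
    (by rw [measure_univ, mul_one])
  rw [← ENNReal.ofReal_natCast, ← ENNReal.ofReal_natCast, ← ENNReal.ofReal_pow (by positivity),
    ← ENNReal.ofReal_mul hα]
  exact ENNReal.ofReal_le_ofReal (card_adaptivePValue_le (v x) hα)

theorem measure_adaptivePValue_le {Γ X : Type*} [Group Γ] [Fintype Γ] [MeasurableSpace Γ]
    [MeasurableSingletonClass Γ] [MeasurableSpace X] {K : ℕ} (ν : Measure X)
    [IsProbabilityMeasure ν] (v : X → Γ → ℝ) (hv : ∀ σ, Measurable fun x => v x σ)
    (φ : Γ → X → X) (hφ : ∀ g, MeasurePreserving (φ g) ν ν)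
    (hvφ : ∀ g x σ, v x (g * σ) = v (φ g x) σ) {α : ℝ} (hα : 0 ≤ α) :
    ((Measure.pi fun _ : Fin K => (PMF.uniformOfFintype Γ).toMeasure).prod ν)
      {z | adaptivePValue (v z.2 1) (fun l => v z.2 (z.1 l)) ≤ α} ≤ ENNReal.ofReal α := by
  set N : ℝ≥0∞ := (Fintype.card Γ : ℝ≥0∞)
  have hN0 : N ≠ 0 := by simp [N]
  have hNtop : N ≠ ⊤ := ENNReal.natCast_ne_top _
  let A (s : Fin (K + 1) → Γ) : Set X :=
    {x | adaptivePValue (v x (s 0)) (fun l => v x (s l.succ)) ≤ α}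
  have hA_mul : ∀ g s, ν (A fun i => g * s i) = ν (A s) := fun g s => by
    have : (A fun i => g * s i) = φ g ⁻¹' A s := by ext x; simp [A, hvφ]
    rw [this, (hφ g).measure_preimage (measurableSet_adaptivePValue_le (hv _)
      (measurable_pi_lambda _ fun _ => hv _) α).nullMeasurableSet]
  have hsections : ((Measure.pi fun _ : Fin K => (PMF.uniformOfFintype Γ).toMeasure).prod ν)
      {z | adaptivePValue (v z.2 1) (fun l => v z.2 (z.1 l)) ≤ α}
        = N⁻¹ ^ K * ∑ τ, ν (A (Fin.cons 1 τ)) := by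
    rw [Measure.prod_apply (measurableSet_adaptivePValue_le
      (y₀ := fun z : (Fin K → Γ) × X => v z.2 1) ((hv 1).comp measurable_snd)
      (measurable_pi_lambda _ fun l => measurable_prod_of_countable_fst
        (f := fun z : (Fin K → Γ) × X => v z.2 (z.1 l)) fun τ => hv (τ l)) α),
      lintegral_fintype, mul_sum]
    refine sum_congr rfl fun τ _ => ?_
    rw [pi_uniformOfFintype_singleton, prod_const, card_univ, Fintype.card_fin, mul_comm]
    rfl
  have hcount : ∑ τ, ν (A (Fin.cons 1 τ)) ≤ ENNReal.ofReal α * N ^ K := by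
    rw [← ENNReal.mul_le_mul_iff_left hN0 hNtop, mul_comm, ← nsmul_eq_mul,
      ← sum_eq_card_smul_sum_cons_one (fun s => ν (A s)) hA_mul, mul_assoc, ← pow_succ]
    exact sum_measure_adaptivePValue_le ν v hv hα
  calc _ = N⁻¹ ^ K * ∑ τ, ν (A (Fin.cons 1 τ)) := hsections
    _ ≤ N⁻¹ ^ K * (ENNReal.ofReal α * N ^ K) := by gcongr
    _ = ENNReal.ofReal α := by
        rw [← ENNReal.inv_pow, mul_left_comm, ENNReal.inv_mul_cancel (pow_ne_zero _ hN0)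
          (ENNReal.pow_ne_top hNtop), mul_one]

theorem map_colwise_comp_eq {Ω ι κ E : Type*} [MeasurableSpace Ω] [MeasurableSpace E]
    [Fintype κ] {μ : Measure Ω} [IsProbabilityMeasure μ] {X : Ω → ι → κ → E}
    (hX : Measurable X) (hind : iIndepFun (fun j ω t => X ω t j) μ) (σ : κ → ι → ι)
    (hσ : ∀ j, μ.map (fun ω t => X ω (σ j t) j) = μ.map (fun ω t => X ω t j)) :
    (μ.map X).map (fun x t j => x (σ j t) j) = μ.map X := by
  have hcol : ∀ j, Measurable fun ω t => X ω t j := fun j => by fun_prop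
  have hcols : Measurable fun ω j t => X ω t j := by fun_prop
  have htr : Measurable fun (y : κ → ι → E) t j => y j t := by fun_prop
  have hlaw : μ.map (fun ω j t => X ω t j) = Measure.pi fun j => μ.map fun ω t => X ω t j :=
    (iIndepFun_iff_map_fun_eq_pi_map fun j => (hcol j).aemeasurable).1 hind
  have hpres : MeasurePreserving (fun (y : κ → ι → E) j t => y j (σ j t))
      (Measure.pi fun j => μ.map fun ω t => X ω t j)
      (Measure.pi fun j => μ.map fun ω t => X ω t j) :=
    measurePreserving_pi (f := fun j (y : ι → E) t => y (σ j t)) _ _ fun j =>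
      ⟨by fun_prop, by rw [Measure.map_map (by fun_prop) (hcol j)]; exact hσ j⟩
  have hX' : μ.map X = (μ.map fun ω j t => X ω t j).map fun y t j => y j t := by
    rw [Measure.map_map htr hcols]; rfl
  rw [hX', hlaw, Measure.map_map (by fun_prop) htr]
  conv_rhs => rw [← hpres.map_eq, Measure.map_map htr hpres.measurable]
  rfl

section Relabel

variable {P : Type*} [Group P] {R : ℕ}

def consOne (w : Fin R → P) : Fin (R + 1) → P := Fin.cons 1 w

@[simp] lemma consOne_zero (w : Fin R → P) : consOne w 0 = 1 := rfl

@[simp] lemma consOne_succ (w : Fin R → P) (r : Fin R) : consOne w r.succ = w r := rfl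

def relabelRounds (g : Equiv.Perm (Fin (R + 1))) (w : Fin R → P) : Fin R → P :=
  fun r => (consOne w (g 0))⁻¹ * consOne w (g r.succ)

lemma consOne_relabelRounds (g : Equiv.Perm (Fin (R + 1))) (w : Fin R → P) (r : Fin (R + 1)) :
    consOne (relabelRounds g w) r = (consOne w (g 0))⁻¹ * consOne w (g r) := by
  cases r using Fin.cases <;> simp [relabelRounds]

lemma relabelRounds_one (w : Fin R → P) : relabelRounds 1 w = w := by
  funext r
  simp [relabelRounds]

lemma relabelRounds_mul (g h : Equiv.Perm (Fin (R + 1))) (w : Fin R → P) :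
    relabelRounds (g * h) w = relabelRounds h (relabelRounds g w) := by
  funext r
  simp only [relabelRounds, consOne_relabelRounds, Equiv.Perm.mul_apply]
  group

def relabelRoundsEquiv (g : Equiv.Perm (Fin (R + 1))) : (Fin R → P) ≃ (Fin R → P) where
  toFun := relabelRounds g
  invFun := relabelRounds g⁻¹
  left_inv w := by rw [← relabelRounds_mul, mul_inv_cancel, relabelRounds_one]
  right_inv w := by rw [← relabelRounds_mul, inv_mul_cancel, relabelRounds_one]

end Relabel

/-- A tiling of `ι × κ` by the rectangles `rows m × cols m`, with `tile t j` the unique tile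
containing `(t, j)`. -/
structure Tiling (ι κ θ : Type*) where
  rows : θ → Finset ι
  cols : θ → Finset κ
  tile : ι → κ → θ
  mem_rows : ∀ t j, t ∈ rows (tile t j)
  mem_cols : ∀ t j, j ∈ cols (tile t j)
  eq_tile : ∀ m t j, t ∈ rows m → j ∈ cols m → m = tile t j

namespace Tiling

variable {ι κ θ : Type*} (𝒯 : Tiling ι κ θ)

abbrev RowPerms : Type _ := (m : θ) → Equiv.Perm {t // t ∈ 𝒯.rows m}

abbrev TileMatrices : Type _ := (m : θ) → Matrix {j // j ∈ 𝒯.cols m} {j // j ∈ 𝒯.cols m} ℝ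

def rowMap (u : 𝒯.RowPerms) (j : κ) (t : ι) : ι :=
  (u (𝒯.tile t j) ⟨t, 𝒯.mem_rows t j⟩).1

variable {𝒯}

lemma rowMap_eq (u : 𝒯.RowPerms) {t : ι} {j : κ} {m : θ} (hm : 𝒯.tile t j = m)
    (ht : t ∈ 𝒯.rows m) : 𝒯.rowMap u j t = (u m ⟨t, ht⟩).1 := by
  subst hm
  rfl

lemma tile_rowMap (u : 𝒯.RowPerms) (j : κ) (t : ι) : 𝒯.tile (𝒯.rowMap u j t) j = 𝒯.tile t j :=
  (𝒯.eq_tile _ _ _ (u _ _).2 (𝒯.mem_cols t j)).symm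

lemma rowMap_of_mem_cols (u : 𝒯.RowPerms) {t : ι} {j j' : κ}
    (hj' : j' ∈ 𝒯.cols (𝒯.tile t j)) : 𝒯.rowMap u j' t = 𝒯.rowMap u j t :=
  rowMap_eq u (𝒯.eq_tile _ t j' (𝒯.mem_rows t j) hj').symm _

lemma rowMap_mul (a b : 𝒯.RowPerms) (j : κ) (t : ι) :
    𝒯.rowMap (a * b) j t = 𝒯.rowMap a j (𝒯.rowMap b j t) :=
  (rowMap_eq a (tile_rowMap b j t) _).symm

lemma rowMap_one (j : κ) (t : ι) : 𝒯.rowMap 1 j t = t := rfl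

variable (𝒯)

def colPerm (u : 𝒯.RowPerms) (j : κ) : Equiv.Perm ι where
  toFun := 𝒯.rowMap u j
  invFun := 𝒯.rowMap u⁻¹ j
  left_inv t := by rw [← rowMap_mul, inv_mul_cancel, rowMap_one]
  right_inv t := by rw [← rowMap_mul, mul_inv_cancel, rowMap_one]

def permute {E : Type*} (u : 𝒯.RowPerms) (x : ι → κ → E) : ι → κ → E :=
  fun t j => x (𝒯.rowMap u j t) j

def residual (H : 𝒯.TileMatrices)
    (x : ι → κ → ℝ) : ι → κ → ℝ :=
  fun t j => ∑ j' : {j' // j' ∈ 𝒯.cols (𝒯.tile t j)},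
    x t j' * H (𝒯.tile t j) j' ⟨j, 𝒯.mem_cols t j⟩

variable {𝒯}

lemma permute_permute {E : Type*} (a b : 𝒯.RowPerms) (x : ι → κ → E) :
    𝒯.permute a (𝒯.permute b x) = 𝒯.permute (b * a) x := by
  funext t j
  simp only [permute, rowMap_mul]

lemma residual_eq (H : 𝒯.TileMatrices)
    (x : ι → κ → ℝ) {t : ι} {j : κ} {m : θ} (hm : 𝒯.tile t j = m) (hj : j ∈ 𝒯.cols m) :
    𝒯.residual H x t j = ∑ j' : {j' // j' ∈ 𝒯.cols m}, x t j' * H m j' ⟨j, hj⟩ := by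
  subst hm
  rfl

lemma residual_permute (H : 𝒯.TileMatrices)
    (u : 𝒯.RowPerms) (x : ι → κ → ℝ) :
    𝒯.residual H (𝒯.permute u x) = 𝒯.permute u (𝒯.residual H x) := by
  funext t j
  rw [permute, residual_eq H x (tile_rowMap u j t) (𝒯.mem_cols t j)]
  exact Finset.sum_congr rfl fun j' _ => by rw [permute, rowMap_of_mem_cols u j'.2]

lemma measurable_permute {E : Type*} [MeasurableSpace E] (u : 𝒯.RowPerms) :
    Measurable (𝒯.permute u : (ι → κ → E) → ι → κ → E) := by
  unfold permute
  fun_prop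

lemma measurable_residual (H : 𝒯.TileMatrices) :
    Measurable (𝒯.residual H) := by
  unfold residual
  fun_prop

theorem map_permute_eq [Fintype κ] {Ω E : Type*} [MeasurableSpace Ω] [MeasurableSpace E]
    {μ : Measure Ω} [IsProbabilityMeasure μ] {ε : Ω → ι → κ → E} (hε : Measurable ε)
    (hind : iIndepFun (fun j ω t => ε ω t j) μ)
    (hexch : ∀ (j : κ) (π : Equiv.Perm ι), (∀ t, 𝒯.tile (π t) j = 𝒯.tile t j) →
      μ.map (fun ω t => ε ω (π t) j) = μ.map (fun ω t => ε ω t j))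
    (u : 𝒯.RowPerms) : (μ.map ε).map (𝒯.permute u) = μ.map ε :=
  map_colwise_comp_eq hε hind _ fun j => hexch j (𝒯.colPerm u j) (tile_rowMap u j)

variable (𝒯) {R : ℕ}

abbrev RoundPerms (R : ℕ) : Type _ := (mr : θ × Fin R) → Equiv.Perm {t // t ∈ 𝒯.rows mr.1}

variable {𝒯}

def roundsEquiv : 𝒯.RoundPerms R ≃ (Fin R → 𝒯.RowPerms) where
  toFun q r m := q (m, r)
  invFun w mr := w mr.2 mr.1
  left_inv _ := rfl
  right_inv _ := rfl

def roundPerm (q : 𝒯.RoundPerms R) : Fin (R + 1) → 𝒯.RowPerms :=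
  consOne (roundsEquiv q)

/-- `roundResiduals H q x r` is the paper's `ε̃⁽ʳ⁾` computed from the data `x` and the
permutations `q`. -/
def roundResiduals (H : 𝒯.TileMatrices)
    (q : 𝒯.RoundPerms R) (x : ι → κ → ℝ) : Fin (R + 1) → ι → κ → ℝ :=
  fun r => 𝒯.permute (roundPerm q r) (𝒯.residual H x)

def relabelEquiv (g : Equiv.Perm (Fin (R + 1))) : 𝒯.RoundPerms R ≃ 𝒯.RoundPerms R :=
  roundsEquiv.trans ((relabelRoundsEquiv g).trans roundsEquiv.symm)

lemma roundsEquiv_relabelEquiv (g : Equiv.Perm (Fin (R + 1))) (q : 𝒯.RoundPerms R) :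
    roundsEquiv (relabelEquiv g q) = relabelRounds g (roundsEquiv q) :=
  roundsEquiv.apply_symm_apply (relabelRoundsEquiv g (roundsEquiv q))

lemma roundResiduals_apply_perm (H : 𝒯.TileMatrices)
    (g : Equiv.Perm (Fin (R + 1))) (q : 𝒯.RoundPerms R) (x : ι → κ → ℝ) (r : Fin (R + 1)) :
    roundResiduals H q x (g r)
      = roundResiduals H (relabelEquiv g q) (𝒯.permute (roundPerm q (g 0)) x) r := by
  simp only [roundResiduals, residual_permute, permute_permute, roundPerm,
    roundsEquiv_relabelEquiv, consOne_relabelRounds, mul_inv_cancel_left]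

lemma measurable_roundResiduals (H : 𝒯.TileMatrices)
    (q : 𝒯.RoundPerms R) (r : Fin (R + 1)) : Measurable fun x => roundResiduals H q x r :=
  (measurable_permute _).comp (measurable_residual H)

theorem measurePreserving_relabel [Fintype θ] [DecidableEq ι] (μx : Measure (ι → κ → ℝ))
    [SFinite μx] (hμx : ∀ u : 𝒯.RowPerms, μx.map (𝒯.permute u) = μx)
    (g : Equiv.Perm (Fin (R + 1))) :
    MeasurePreserving (fun y : 𝒯.RoundPerms R × (ι → κ → ℝ) =>
        (relabelEquiv g y.1, 𝒯.permute (roundPerm y.1 (g 0)) y.2))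
      ((Measure.pi fun mr : θ × Fin R => uniformPermMeasure {t // t ∈ 𝒯.rows mr.1}).prod μx)
      ((Measure.pi fun mr : θ × Fin R => uniformPermMeasure {t // t ∈ 𝒯.rows mr.1}).prod μx) :=
  (measurePreserving_of_measure_singleton_eq pi_uniformOfFintype_singleton
    (relabelEquiv g)).skew_product (g := fun q => 𝒯.permute (roundPerm q (g 0)))
    (measurable_prod_of_countable_fst fun q => measurable_permute (roundPerm q (g 0)))
    (ae_of_all _ fun q => hμx (roundPerm q (g 0)))

theorem measure_adaptivePValue_roundResiduals_le [Fintype θ] [DecidableEq ι]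
    {K : ℕ} (H : 𝒯.TileMatrices) (μx : Measure (ι → κ → ℝ)) [IsProbabilityMeasure μx]
    (hμx : ∀ u : 𝒯.RowPerms, μx.map (𝒯.permute u) = μx)
    (f : (Fin (R + 1) → ι → κ → ℝ) → ℝ) (hf : Measurable f) {α : ℝ} (hα : 0 ≤ α) :
    ((Measure.pi fun _ : Fin K => uniformPermMeasure (Fin (R + 1))).prod
      ((Measure.pi fun mr : θ × Fin R => uniformPermMeasure {t // t ∈ 𝒯.rows mr.1}).prod μx))
      {z | adaptivePValue (f (roundResiduals H z.2.1 z.2.2))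
        (fun l => f fun r => roundResiduals H z.2.1 z.2.2 (z.1 l r)) ≤ α}
      ≤ ENNReal.ofReal α := by
  have hv : ∀ σ : Equiv.Perm (Fin (R + 1)),
      Measurable fun y : 𝒯.RoundPerms R × (ι → κ → ℝ) => f fun r => roundResiduals H y.1 y.2 (σ r) :=
    fun σ => hf.comp <| measurable_pi_lambda _ fun r => measurable_prod_of_countable_fst
      (f := fun y : 𝒯.RoundPerms R × (ι → κ → ℝ) => roundResiduals H y.1 y.2 (σ r))
      fun q => measurable_roundResiduals H q (σ r)
  exact measure_adaptivePValue_le _ _ hv _ (measurePreserving_relabel μx hμx)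
    (fun g y σ => by simp only [Equiv.Perm.mul_apply, roundResiduals_apply_perm]) hα

end Tiling

/-- **validity of the adaptive mosaic p-value.** In the mosaic permutation
test setting (deterministic tiling, `ε` satisfying `H₀` and local exchangeability,
deterministic matrices `H m`, mosaic residuals `ε̃⁽⁰⁾ := ε̂` and permuted variants
`ε̃⁽ʳ⁾` built from i.i.d. uniformly random within-tile row permutations independent of `ε`),
for any measurable meta test-statistic `f` and i.i.d. uniformly random permutations
`π₁, …, π_K` of `{0, …, R}` independent of everything else, the adaptive p-value
`p_adaptive = (1 + ∑_ℓ 1{f(ε̃⁽⁰⁾,…,ε̃⁽ᴿ⁾) ≤ f(ε̃^{(π_ℓ(0))},…,ε̃^{(π_ℓ(R))})})/(K+1)`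
satisfies `P(p_adaptive ≤ α) ≤ α` for every `α ∈ (0,1)`. -/
theorem adaptive_mosaic_pvalue_valid
    {Ω : Type*} [MeasurableSpace Ω] (μ : Measure Ω) [IsProbabilityMeasure μ]
    (T p M R K : ℕ) (ε : Ω → Fin T → Fin p → ℝ) (hmeas : Measurable ε)
    -- the tiling: every `(t, j)` lies in exactly one rectangle `B m × G m`,
    -- namely the one indexed by `tile t j`:
    (B : Fin M → Finset (Fin T)) (G : Fin M → Finset (Fin p))
    (tile : Fin T → Fin p → Fin M)
    (hB : ∀ t j, t ∈ B (tile t j)) (hG : ∀ t j, j ∈ G (tile t j))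
    (huniq : ∀ m t j, t ∈ B m → j ∈ G m → m = tile t j)
    -- `H₀`: the columns of `ε` are jointly independent:
    (hcol_indep : iIndepFun (fun j ω => fun t => ε ω t j) μ)
    -- local exchangeability of `ε` with respect to the tiling:
    (hlocexch : ∀ (j : Fin p) (π : Equiv.Perm (Fin T)), (∀ t, tile (π t) j = tile t j) →
      Measure.map (fun ω => fun t => ε ω (π t) j) μ =
        Measure.map (fun ω => fun t => ε ω t j) μ)
    -- deterministic matrices `H m ∈ ℝ^{|G m| × |G m|}`:
    (H : (m : Fin M) → Matrix {j : Fin p // j ∈ G m} {j : Fin p // j ∈ G m} ℝ)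
    -- the mosaic residual matrix `ε̂` with `ε̂_{B_m, G_m} := ε_(m) H_m`:
    (εh : Ω → Fin T → Fin p → ℝ)
    (hεh : ∀ ω t j, εh ω t j =
      ∑ j' : {x : Fin p // x ∈ G (tile t j)}, ε ω t j'.1 * H (tile t j) j' ⟨j, hG t j⟩)
    -- the i.i.d. uniformly random within-tile row permutations, independent of `ε`:
    (π : (m : Fin M) → Fin R → Ω → Equiv.Perm {t : Fin T // t ∈ B m})
    (hπmeas : ∀ m r, Measurable (π m r))
    (hπ : Measure.map (fun ω => ((fun mr : Fin M × Fin R => π mr.1 mr.2 ω), ε ω)) μ =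
      (Measure.pi fun mr : Fin M × Fin R =>
        uniformPermMeasure {t : Fin T // t ∈ B mr.1}).prod (Measure.map ε μ))
    -- the permuted residual matrices, with `ε̃⁽⁰⁾ = ε̂`:
    (εt : Fin (R + 1) → Ω → Fin T → Fin p → ℝ)
    (hεt0 : ∀ ω, εt 0 ω = εh ω)
    (hεt : ∀ (r : Fin R) ω, εt r.succ ω =
      fun t j => εh ω (π (tile t j) r ω ⟨t, hB t j⟩).1 j)
    -- an arbitrary measurable meta test-statistic on `(R+1)`-tuples of matrices:
    (f : (Fin (R + 1) → Fin T → Fin p → ℝ) → ℝ) (hf : Measurable f)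
    -- the i.i.d. uniformly random permutations of `{0, …, R}`, independent of everything:
    (τ : Fin K → Ω → Equiv.Perm (Fin (R + 1)))
    (hτmeas : ∀ l, Measurable (τ l))
    (hτ : Measure.map
        (fun ω => ((fun l => τ l ω),
          ((fun mr : Fin M × Fin R => π mr.1 mr.2 ω), ε ω))) μ =
      (Measure.pi fun _ : Fin K => uniformPermMeasure (Fin (R + 1))).prod
        (Measure.map (fun ω => ((fun mr : Fin M × Fin R => π mr.1 mr.2 ω), ε ω)) μ)) :
    ∀ α ∈ Set.Ioo (0 : ℝ) 1,
      μ {ω | (1 + ∑ l : Fin K,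
          if f (fun r => εt r ω) ≤ f (fun r => εt (τ l ω r) ω) then (1 : ℝ) else 0) / (K + 1)
        ≤ α} ≤ ENNReal.ofReal α := by
  rintro α ⟨hα, -⟩
  let 𝒯 : Tiling (Fin T) (Fin p) (Fin M) := ⟨B, G, tile, hB, hG, huniq⟩
  let Z ω : (Fin K → Equiv.Perm (Fin (R + 1))) × (𝒯.RoundPerms R × (Fin T → Fin p → ℝ)) :=
    ((fun l => τ l ω), ((fun mr => π mr.1 mr.2 ω), ε ω))
  have hZ : Measurable Z := (measurable_pi_lambda _ hτmeas).prodMk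
    ((measurable_pi_lambda _ fun mr => hπmeas mr.1 mr.2).prodMk hmeas)
  have hεt_eq : ∀ r ω, εt r ω = Tiling.roundResiduals H (Z ω).2.1 (Z ω).2.2 r := by
    intro r ω
    cases r using Fin.cases with
    | zero => rw [hεt0]; funext t j; exact hεh ω t j
    | succ r => rw [hεt r ω]; funext t j; rw [hεh]; rfl
  have := Measure.isProbabilityMeasure_map (μ := μ) hmeas.aemeasurable
  calc _ ≤ (μ.map Z) {z | adaptivePValue (f (Tiling.roundResiduals H z.2.1 z.2.2))
          (fun l => f fun r => Tiling.roundResiduals H z.2.1 z.2.2 (z.1 l r)) ≤ α} := by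
        simp only [hεt_eq]
        exact Measure.le_map_apply hZ.aemeasurable _
    _ ≤ ENNReal.ofReal α := by
        rw [hτ, hπ]
        exact Tiling.measure_adaptivePValue_roundResiduals_le (𝒯 := 𝒯) H (μ.map ε)
          (Tiling.map_permute_eq hmeas hcol_indep hlocexch) f hf hα.le
end

section
/- Let {(B_m,G_m)}_{m=1}^M be a deterministic tiling of [T]×[p], and let ε ∈ R^{T×p} be a random matrix whose columns are jointly independent (H_0) and which is locally exchangeable with respect to the tiling. Then for all deterministic permutation matrices P_1 ∈ R^{|B_1|×|B_1|},…,P_M ∈ R^{|B_M|×|B_M|}, the tuple (P_1 ε_{(1)},…,P_M ε_{(M)}) has the same joint distribution as (ε_{(1)},…,ε_{(M)}). -/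
/-!
For each column `j`, the tile permutations `σ m` assemble into a single permutation of the rows
that moves every entry of column `j` only inside its own tile; by local exchangeability it leaves
the law of column `j` unchanged. Reindexing each column by a deterministic map keeps the columns
independent, and the joint law of independent columns is determined by their marginal laws, so
the columnwise permuted matrix has the same law as `ε`. Reading off the tiles, which is a
measurable map, turns this into the claimed equality of tile laws.
-/

open MeasureTheory ProbabilityTheory

theorem identDistrib_reindex_columns {Ω τ κ α : Type*} [MeasurableSpace Ω] [MeasurableSpace α]
    [Countable κ] {μ : Measure Ω} {ε : Ω → τ → κ → α} (hε : Measurable ε)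
    (hindep : iIndepFun (fun j ω t ↦ ε ω t j) μ) (π : κ → τ → τ)
    (hexch : ∀ j, μ.map (fun ω t ↦ ε ω (π j t) j) = μ.map (fun ω t ↦ ε ω t j)) :
    IdentDistrib (fun ω j t ↦ ε ω (π j t) j) (fun ω j t ↦ ε ω t j) μ μ :=
  IdentDistrib.pi (fun j ↦ ⟨(by fun_prop : Measurable _).aemeasurable,
    (by fun_prop : Measurable _).aemeasurable, hexch j⟩)
    (hindep.comp (fun j x t ↦ x (π j t)) fun _ ↦ by fun_prop) hindep

def tilesOfColumns {τ κ ι α : Type*} (B : ι → Finset τ) (G : ι → Finset κ) (x : κ → τ → α) :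
    (m : ι) → {t // t ∈ B m} → {j // j ∈ G m} → α :=
  fun _ t j ↦ x j t

lemma measurable_tilesOfColumns {τ κ ι α : Type*} [MeasurableSpace α]
    (B : ι → Finset τ) (G : ι → Finset κ) : Measurable (tilesOfColumns (α := α) B G) := by
  unfold tilesOfColumns
  fun_prop

structure IsTiling {τ κ ι : Type*} (B : ι → Finset τ) (G : ι → Finset κ) (tile : τ → κ → ι) :
    Prop where
  mem_rows : ∀ t j, t ∈ B (tile t j)
  mem_cols : ∀ t j, j ∈ G (tile t j)
  eq_tile : ∀ m t j, t ∈ B m → j ∈ G m → m = tile t j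

namespace IsTiling

variable {τ κ ι : Type*} {B : ι → Finset τ} {G : ι → Finset κ} {tile : τ → κ → ι}
  (h : IsTiling B G tile) (σ : ∀ m, Equiv.Perm {t // t ∈ B m})

def rowPermFun (j : κ) (t : τ) : τ :=
  σ (tile t j) ⟨t, h.mem_rows t j⟩

lemma rowPermFun_of_mem {m : ι} {t : τ} {j : κ} (ht : t ∈ B m) (hj : j ∈ G m) :
    h.rowPermFun σ j t = σ m ⟨t, ht⟩ := by
  obtain rfl := h.eq_tile m t j ht hj
  rfl

lemma rowPermFun_inv_rowPermFun (j : κ) (t : τ) :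
    h.rowPermFun σ⁻¹ j (h.rowPermFun σ j t) = t := by
  change h.rowPermFun σ⁻¹ j (σ (tile t j) ⟨t, h.mem_rows t j⟩) = t
  rw [h.rowPermFun_of_mem σ⁻¹ (σ (tile t j) _).2 (h.mem_cols t j)]
  simp

def rowPerm (j : κ) : Equiv.Perm τ where
  toFun := h.rowPermFun σ j
  invFun := h.rowPermFun σ⁻¹ j
  left_inv := h.rowPermFun_inv_rowPermFun σ j
  right_inv t := by simpa using h.rowPermFun_inv_rowPermFun σ⁻¹ j t

lemma tile_rowPerm (j : κ) (t : τ) : tile (h.rowPerm σ j t) j = tile t j :=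
  (h.eq_tile _ _ j (σ _ _).2 (h.mem_cols t j)).symm

lemma tilesOfColumns_rowPerm {α : Type*} (x : κ → τ → α) :
    tilesOfColumns B G (fun j t ↦ x j (h.rowPerm σ j t)) =
      fun m t (j : {j // j ∈ G m}) ↦ x j (σ m t) := by
  funext m t j
  exact congrArg (x j) (h.rowPermFun_of_mem σ t.2 j.2)

end IsTiling

theorem within_tile_permutations_preserve_tile_law_general
    {Ω : Type*} [MeasurableSpace Ω] (μ : Measure Ω)
    (T p M : ℕ) (ε : Ω → Fin T → Fin p → ℝ) (hmeas : Measurable ε)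
    -- the tiling: every `(t, j)` lies in exactly one rectangle `B m × G m`,
    -- namely the one indexed by `tile t j`:
    (B : Fin M → Finset (Fin T)) (G : Fin M → Finset (Fin p))
    (tile : Fin T → Fin p → Fin M)
    (hB : ∀ t j, t ∈ B (tile t j)) (hG : ∀ t j, j ∈ G (tile t j))
    (huniq : ∀ m t j, t ∈ B m → j ∈ G m → m = tile t j)
    -- `H₀`: the columns of `ε` are jointly independent:
    (hcol_indep : iIndepFun (fun j ω => fun t => ε ω t j) μ)
    -- local exchangeability of `ε` with respect to the tiling:
    (hlocexch : ∀ (j : Fin p) (π : Equiv.Perm (Fin T)), (∀ t, tile (π t) j = tile t j) →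
      Measure.map (fun ω => fun t => ε ω (π t) j) μ =
        Measure.map (fun ω => fun t => ε ω t j) μ) :
    -- conclusion: for all deterministic within-tile row permutations `σ m` of `B m`,
    -- the tuple of row-permuted tiles has the same law as the tuple of tiles
    ∀ σ : (m : Fin M) → Equiv.Perm {t : Fin T // t ∈ B m},
      Measure.map
        (fun ω => fun (m : Fin M) (t : {t : Fin T // t ∈ B m}) (j : {j : Fin p // j ∈ G m}) =>
          ε ω ((σ m t : {t : Fin T // t ∈ B m}) : Fin T) (j : Fin p)) μ =
      Measure.map
        (fun ω => fun (m : Fin M) (t : {t : Fin T // t ∈ B m}) (j : {j : Fin p // j ∈ G m}) =>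
          ε ω (t : Fin T) (j : Fin p)) μ := by
  intro σ
  have hT : IsTiling B G tile := ⟨hB, hG, huniq⟩
  have hcols := identDistrib_reindex_columns hmeas hcol_indep (fun j ↦ hT.rowPerm σ j)
    fun j ↦ hlocexch j _ (hT.tile_rowPerm σ j)
  convert (hcols.comp (measurable_tilesOfColumns B G)).map_eq using 2
  · funext ω
    exact (hT.tilesOfColumns_rowPerm σ fun j t ↦ ε ω t j).symm
  · rfl

/-- For a deterministic tiling `{(B m, G m)}` of `[T] × [p]` and a random
matrix `ε` whose columns are jointly independent (`H₀`) and which is locally exchangeable with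
respect to the tiling, applying arbitrary deterministic within-tile row permutations to the
tiles does not change the joint distribution of the tuple of tiles. -/
theorem within_tile_permutations_preserve_tile_law
    {Ω : Type*} [MeasurableSpace Ω] (μ : Measure Ω) [IsProbabilityMeasure μ]
    (T p M : ℕ) (ε : Ω → Fin T → Fin p → ℝ) (hmeas : Measurable ε)
    -- the tiling: every `(t, j)` lies in exactly one rectangle `B m × G m`,
    -- namely the one indexed by `tile t j`:
    (B : Fin M → Finset (Fin T)) (G : Fin M → Finset (Fin p))
    (tile : Fin T → Fin p → Fin M)
    (hB : ∀ t j, t ∈ B (tile t j)) (hG : ∀ t j, j ∈ G (tile t j))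
    (huniq : ∀ m t j, t ∈ B m → j ∈ G m → m = tile t j)
    -- `H₀`: the columns of `ε` are jointly independent:
    (hcol_indep : iIndepFun (fun j ω => fun t => ε ω t j) μ)
    -- local exchangeability of `ε` with respect to the tiling:
    (hlocexch : ∀ (j : Fin p) (π : Equiv.Perm (Fin T)), (∀ t, tile (π t) j = tile t j) →
      Measure.map (fun ω => fun t => ε ω (π t) j) μ =
        Measure.map (fun ω => fun t => ε ω t j) μ) :
    -- conclusion: for all deterministic within-tile row permutations `σ m` of `B m`,
    -- the tuple of row-permuted tiles has the same law as the tuple of tiles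
    ∀ σ : (m : Fin M) → Equiv.Perm {t : Fin T // t ∈ B m},
      Measure.map
        (fun ω => fun (m : Fin M) (t : {t : Fin T // t ∈ B m}) (j : {j : Fin p // j ∈ G m}) =>
          ε ω ((σ m t : {t : Fin T // t ∈ B m}) : Fin T) (j : Fin p)) μ =
      Measure.map
        (fun ω => fun (m : Fin M) (t : {t : Fin T // t ∈ B m}) (j : {j : Fin p // j ∈ G m}) =>
          ε ω (t : Fin T) (j : Fin p)) μ :=
  within_tile_permutations_preserve_tile_law_general μ T p M ε hmeas B G tile hB hG huniq hcol_indep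
    hlocexch
end

section
/- Let {(B_m,G_m)}_{m=1}^M be a deterministic tiling of [T]×[p], let ε ∈ R^{T×p} satisfy H_0 (jointly independent columns) and local exchangeability with respect to the tiling, and let H_m ∈ R^{|G_m|×|G_m|} be deterministic matrices. Define the mosaic residual matrix ε̂ ∈ R^{T×p} by ε̂_{B_m,G_m} := ε_{(m)} H_m, and for r = 1,…,R define ε̃^{(r)} ∈ R^{T×p} by ε̃^{(r)}_{B_m,G_m} := P_m^{(r)} ε_{(m)} H_m, where the P_m^{(r)} are i.i.d. uniformly random permutation matrices independent of ε. Then the tuple (ε̂, ε̃^{(1)},…,ε̃^{(R)}) is exchangeable. -/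
/-!
Conditionally on the permutations, each of `ε̂, ε̃⁽¹⁾, …, ε̃⁽ᴿ⁾` is `ε̂` with the rows of every
tile shuffled. The law of `ε` is invariant under such deterministic shuffles: each column is
permuted within its tiles, which preserves its law by local exchangeability, and the columns are
independent. Right multiplication by `H_m` commutes with permuting rows, so the law of `ε̂` is
invariant as well. Reordering the tuple by `τ` amounts to shuffling `ε̂` once more, by the
permutations of copy `τ 0`, and relabelling the permutations through a bijection of their finite
range. The first step preserves the law of `ε̂`, the second the uniform law of the permutations,
and since the two are independent the joint law is preserved: it is a skew product.
-/

open MeasureTheory ProbabilityTheory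

open Equiv
open scoped Matrix

instance Equiv.Perm.instDiscreteMeasurableSpace {α : Type*} :
    DiscreteMeasurableSpace (Perm α) :=
  ⟨fun _ => MeasurableSpace.measurableSet_top⟩

section UniformPerm

variable {α : Type*} [Fintype α] [DecidableEq α]

instance isProbabilityMeasure_uniformPermMeasure : IsProbabilityMeasure (uniformPermMeasure α) :=
  have : Nonempty (Perm α) := ⟨1⟩
  PMF.toMeasure.isProbabilityMeasure _

theorem uniformPermMeasure_singleton (g : Perm α) :
    uniformPermMeasure α {g} = (Fintype.card (Perm α) : ENNReal)⁻¹ := by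
  have : Nonempty (Perm α) := ⟨1⟩
  rw [uniformPermMeasure, PMF.toMeasure_apply_singleton _ _ (measurableSet_singleton g),
    PMF.uniformOfFintype_apply]

end UniformPerm

theorem measurePreserving_pi_uniformPermMeasure {ι : Type*} [Fintype ι] {α : ι → Type*}
    [∀ i, Fintype (α i)] [∀ i, DecidableEq (α i)] (e : (∀ i, Perm (α i)) ≃ ∀ i, Perm (α i)) :
    MeasurePreserving e (Measure.pi fun i => uniformPermMeasure (α i))
      (Measure.pi fun i => uniformPermMeasure (α i)) := by
  have hsingleton : ∀ g : ∀ i, Perm (α i), Measure.pi (fun i => uniformPermMeasure (α i)) {g} =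
      ∏ i, (Fintype.card (Perm (α i)) : ENNReal)⁻¹ := fun g => by
    simp only [← Set.univ_pi_singleton, Measure.pi_pi, uniformPermMeasure_singleton]
  refine ⟨Measurable.of_discrete, Measure.ext_iff_singleton.mpr fun g => ?_⟩
  rw [Measure.map_apply Measurable.of_discrete (measurableSet_singleton g),
    ← e.image_symm_eq_preimage, Set.image_singleton, hsingleton, hsingleton]

theorem MeasureTheory.Measure.map_prodMk_comp_right {Ω α β γ : Type*} [MeasurableSpace Ω]
    [MeasurableSpace α] [MeasurableSpace β] [MeasurableSpace γ] {μ : Measure Ω}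
    {f : Ω → α} {g : Ω → β} (hf : Measurable f) (hg : Measurable g) {F : β → γ}
    (hF : Measurable F) {P : Measure α} {ν : Measure β} [SFinite P] [SFinite ν]
    (h : μ.map (fun ω => (f ω, g ω)) = P.prod ν) :
    μ.map (fun ω => (f ω, F (g ω))) = P.prod (ν.map F) := by
  calc μ.map (fun ω => (f ω, F (g ω)))
      = (μ.map fun ω => (f ω, g ω)).map (Prod.map id F) :=
        (Measure.map_map (measurable_id.prodMap hF) (hf.prodMk hg)).symm
    _ = P.prod (ν.map F) := by
        rw [h, ← Measure.map_prod_map _ _ measurable_id hF, Measure.map_id]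

theorem ProbabilityTheory.iIndepFun.map_pi_comp_eq {Ω ι : Type*} [MeasurableSpace Ω] [Fintype ι]
    {β : ι → Type*} [∀ i, MeasurableSpace (β i)] {μ : Measure Ω} [IsProbabilityMeasure μ]
    {f : ∀ i, Ω → β i} (hf : ∀ i, Measurable (f i)) (hind : iIndepFun f μ)
    {φ : ∀ i, β i → β i} (hφ : ∀ i, Measurable (φ i))
    (hlaw : ∀ i, μ.map (φ i ∘ f i) = μ.map (f i)) :
    μ.map (fun ω i => φ i (f i ω)) = μ.map (fun ω i => f i ω) := by
  change μ.map (fun ω i => (φ i ∘ f i) ω) = _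
  rw [(iIndepFun_iff_map_fun_eq_pi_map fun i => ((hφ i).comp (hf i)).aemeasurable).mp
      (hind.comp φ hφ),
    (iIndepFun_iff_map_fun_eq_pi_map fun i => (hf i).aemeasurable).mp hind]
  exact congrArg Measure.pi (funext hlaw)

namespace Mosaic

variable {T p M : ℕ} {B : Fin M → Finset (Fin T)} {G : Fin M → Finset (Fin p)}
  {tile : Fin T → Fin p → Fin M}

def tileAct (tile : Fin T → Fin p → Fin M) (γ : ∀ m, Perm {t // t ∈ B m})
    (x : Fin T → Fin p → ℝ) : Fin T → Fin p → ℝ :=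
  fun t j => x (Perm.ofSubtype (γ (tile t j)) t) j

theorem measurable_tileAct (γ : ∀ m, Perm {t // t ∈ B m}) : Measurable (tileAct tile γ) := by
  unfold tileAct
  fun_prop

structure IsTiling (B : Fin M → Finset (Fin T)) (G : Fin M → Finset (Fin p))
    (tile : Fin T → Fin p → Fin M) : Prop where
  mem_rows : ∀ t j, t ∈ B (tile t j)
  mem_cols : ∀ t j, j ∈ G (tile t j)
  eq_tile : ∀ m t j, t ∈ B m → j ∈ G m → m = tile t j

namespace IsTiling

variable (hT : IsTiling B G tile)
include hT

theorem tile_ofSubtype (γ : ∀ m, Perm {t // t ∈ B m}) (t : Fin T) (j : Fin p) :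
    tile (Perm.ofSubtype (γ (tile t j)) t) j = tile t j := by
  rw [Perm.ofSubtype_apply_of_mem _ (hT.mem_rows t j)]
  exact (hT.eq_tile _ _ _ (γ (tile t j) _).2 (hT.mem_cols t j)).symm

theorem injective_ofSubtype_tile (γ : ∀ m, Perm {t // t ∈ B m}) (j : Fin p) :
    Function.Injective fun t => Perm.ofSubtype (γ (tile t j)) t := by
  intro a b hab
  have htile : tile a j = tile b j := by
    rw [← hT.tile_ofSubtype γ a, ← hT.tile_ofSubtype γ b]
    exact congrArg (tile · j) hab
  dsimp only at hab
  rw [htile] at hab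
  exact (Perm.ofSubtype (γ (tile b j))).injective hab

theorem tileAct_tileAct (γ δ : ∀ m, Perm {t // t ∈ B m}) (x : Fin T → Fin p → ℝ) :
    tileAct tile γ (tileAct tile δ x) = tileAct tile (δ * γ) x := by
  funext t j
  simp only [tileAct]
  rw [hT.tile_ofSubtype, Pi.mul_apply, map_mul, Perm.mul_apply]

theorem map_tileAct_eq {Ω : Type*} [MeasurableSpace Ω] {μ : Measure Ω} [IsProbabilityMeasure μ]
    {ε : Ω → Fin T → Fin p → ℝ} (hε : Measurable ε)
    (hcol : iIndepFun (fun j ω t => ε ω t j) μ)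
    (hloc : ∀ (j : Fin p) (σ : Perm (Fin T)), (∀ t, tile (σ t) j = tile t j) →
      μ.map (fun ω t => ε ω (σ t) j) = μ.map (fun ω t => ε ω t j))
    (γ : ∀ m, Perm {t // t ∈ B m}) :
    (μ.map ε).map (tileAct tile γ) = μ.map ε := by
  have hcolumn : ∀ j, μ.map (fun ω t => ε ω (Perm.ofSubtype (γ (tile t j)) t) j) =
      μ.map (fun ω t => ε ω t j) := fun j =>
    hloc j (.ofBijective _ (Finite.injective_iff_bijective.mp (hT.injective_ofSubtype_tile γ j)))
      (hT.tile_ofSubtype γ · j)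
  have hcolumns := hcol.map_pi_comp_eq (fun j => by fun_prop)
    (φ := fun j y t => y (Perm.ofSubtype (γ (tile t j)) t)) (fun j => by fun_prop) hcolumn
  have htranspose : Measurable fun y : Fin p → Fin T → ℝ => fun t j => y j t := by fun_prop
  calc (μ.map ε).map (tileAct tile γ)
      = (μ.map fun ω j t => ε ω (Perm.ofSubtype (γ (tile t j)) t) j).map
          fun y t j => y j t := by
        rw [Measure.map_map (measurable_tileAct γ) hε, Measure.map_map htranspose (by fun_prop)]
        rfl
    _ = (μ.map fun ω j t => ε ω t j).map fun y t j => y j t := by rw [hcolumns]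
    _ = μ.map ε := by
        rw [Measure.map_map htranspose (by fun_prop)]
        rfl

/-- The mosaic residuals `ε̂_{B_m, G_m} = ε_(m) H_m`, computed row by row. -/
def mosaicResidual (H : ∀ m, Matrix {j // j ∈ G m} {j // j ∈ G m} ℝ)
    (x : Fin T → Fin p → ℝ) : Fin T → Fin p → ℝ :=
  fun t j => ((fun j' : {j' // j' ∈ G (tile t j)} => x t j') ᵥ* H (tile t j)) ⟨j, hT.mem_cols t j⟩

theorem measurable_mosaicResidual (H : ∀ m, Matrix {j // j ∈ G m} {j // j ∈ G m} ℝ) :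
    Measurable (hT.mosaicResidual H) := by
  unfold mosaicResidual Matrix.vecMul dotProduct
  fun_prop

theorem mosaicResidual_apply_of_eq (H : ∀ m, Matrix {j // j ∈ G m} {j // j ∈ G m} ℝ)
    (x : Fin T → Fin p → ℝ) {t : Fin T} {j : Fin p} {m : Fin M} (h : tile t j = m) :
    hT.mosaicResidual H x t j =
      ((fun j' : {j' // j' ∈ G m} => x t j') ᵥ* H m) ⟨j, h ▸ hT.mem_cols t j⟩ := by
  subst h
  rfl

theorem tileAct_mosaicResidual (H : ∀ m, Matrix {j // j ∈ G m} {j // j ∈ G m} ℝ)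
    (γ : ∀ m, Perm {t // t ∈ B m}) (x : Fin T → Fin p → ℝ) :
    tileAct tile γ (hT.mosaicResidual H x) = hT.mosaicResidual H (tileAct tile γ x) := by
  funext t j
  rw [tileAct, hT.mosaicResidual_apply_of_eq H x (hT.tile_ofSubtype γ t j)]
  simp only [mosaicResidual, tileAct]
  congr
  funext j'
  rw [← hT.eq_tile _ _ _ (hT.mem_rows t j) j'.2]

theorem map_mosaicResidual_tileAct_eq (H : ∀ m, Matrix {j // j ∈ G m} {j // j ∈ G m} ℝ)
    {ν : Measure (Fin T → Fin p → ℝ)}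
    (hν : ∀ γ : ∀ m, Perm {t // t ∈ B m}, ν.map (tileAct tile γ) = ν)
    (γ : ∀ m, Perm {t // t ∈ B m}) :
    (ν.map (hT.mosaicResidual H)).map (tileAct tile γ) = ν.map (hT.mosaicResidual H) := by
  have hF := hT.measurable_mosaicResidual H
  have hcomm : tileAct tile γ ∘ hT.mosaicResidual H = hT.mosaicResidual H ∘ tileAct tile γ :=
    funext (hT.tileAct_mosaicResidual H γ)
  rw [Measure.map_map (measurable_tileAct γ) hF, hcomm,
    ← Measure.map_map hF (measurable_tileAct γ), hν]

end IsTiling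

section Shuffle

variable {R : ℕ}

abbrev Shuffles (B : Fin M → Finset (Fin T)) (R : ℕ) : Type :=
  ∀ mr : Fin M × Fin R, Perm {t // t ∈ B mr.1}

/-- The within-tile row permutations producing `ε̂, ε̃⁽¹⁾, …, ε̃⁽ᴿ⁾`. -/
def shuffleTuple (g : Shuffles B R) : Fin (R + 1) → ∀ m, Perm {t // t ∈ B m} :=
  Fin.cons 1 fun r m => g (m, r)

@[simp]
theorem shuffleTuple_zero (g : Shuffles B R) : shuffleTuple g 0 = 1 :=
  rfl

@[simp]
theorem shuffleTuple_succ (g : Shuffles B R) (r : Fin R) :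
    shuffleTuple g r.succ = fun m => g (m, r) :=
  rfl

def shuffledCopies (tile : Fin T → Fin p → Fin M) (g : Shuffles B R) (x : Fin T → Fin p → ℝ) :
    Fin (R + 1) → Fin T → Fin p → ℝ :=
  fun r => tileAct tile (shuffleTuple g r) x

theorem measurable_shuffledCopies :
    Measurable fun q : Shuffles B R × (Fin T → Fin p → ℝ) => shuffledCopies tile q.1 q.2 :=
  measurable_from_prod_countable_right fun g =>
    measurable_pi_lambda _ fun r => measurable_tileAct (shuffleTuple g r)

theorem eq_shuffledCopies (hB : ∀ t j, t ∈ B (tile t j)) {W : Fin (R + 1) → Fin T → Fin p → ℝ}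
    {g : Shuffles B R} {x : Fin T → Fin p → ℝ} (h0 : W 0 = x)
    (hsucc : ∀ r, W r.succ = fun t j => x (g (tile t j, r) ⟨t, hB t j⟩) j) :
    W = shuffledCopies tile g x := by
  funext r
  cases r using Fin.cases with
  | zero =>
    rw [h0]
    funext t j
    simp [shuffledCopies, tileAct]
  | succ r =>
    rw [hsucc]
    funext t j
    exact congrArg (x · j) (Perm.ofSubtype_apply_of_mem _ (hB t j)).symm

/-- Relabels the permutations so that copy `τ 0` becomes the reference copy. -/
def reshuffle (τ : Perm (Fin (R + 1))) (g : Shuffles B R) : Shuffles B R :=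
  fun mr => ((shuffleTuple g (τ 0))⁻¹ * shuffleTuple g (τ mr.2.succ)) mr.1

theorem shuffleTuple_reshuffle (τ : Perm (Fin (R + 1))) (g : Shuffles B R) (r : Fin (R + 1)) :
    shuffleTuple (reshuffle τ g) r = (shuffleTuple g (τ 0))⁻¹ * shuffleTuple g (τ r) := by
  cases r using Fin.cases with
  | zero => simp
  | succ r => rfl

theorem reshuffle_inv_reshuffle (τ : Perm (Fin (R + 1))) (g : Shuffles B R) :
    reshuffle τ⁻¹ (reshuffle τ g) = g := by
  funext mr
  change ((shuffleTuple (reshuffle τ g) (τ⁻¹ 0))⁻¹ * shuffleTuple (reshuffle τ g) (τ⁻¹ mr.2.succ))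
    mr.1 = g mr
  simp only [shuffleTuple_reshuffle, Perm.coe_inv, Equiv.apply_symm_apply, shuffleTuple_zero,
    mul_one, inv_inv, mul_inv_cancel_left, shuffleTuple_succ]

def reshuffleEquiv (τ : Perm (Fin (R + 1))) : Shuffles B R ≃ Shuffles B R where
  toFun := reshuffle τ
  invFun := reshuffle τ⁻¹
  left_inv := reshuffle_inv_reshuffle τ
  right_inv g := by simpa using reshuffle_inv_reshuffle τ⁻¹ g

end Shuffle

namespace IsTiling

variable (hT : IsTiling B G tile)
include hT

theorem shuffledCopies_comp {R : ℕ} (τ : Perm (Fin (R + 1))) (g : Shuffles B R)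
    (x : Fin T → Fin p → ℝ) :
    shuffledCopies tile g x ∘ τ =
      shuffledCopies tile (reshuffle τ g) (tileAct tile (shuffleTuple g (τ 0)) x) := by
  funext r
  simp only [Function.comp_apply, shuffledCopies, hT.tileAct_tileAct, shuffleTuple_reshuffle,
    mul_inv_cancel_left]

theorem map_shuffledCopies_comp_eq {R : ℕ} {ν : Measure (Fin T → Fin p → ℝ)} [SFinite ν]
    (hν : ∀ γ : ∀ m, Perm {t // t ∈ B m}, ν.map (tileAct tile γ) = ν)
    (τ : Perm (Fin (R + 1))) :
    ((Measure.pi fun mr : Fin M × Fin R => uniformPermMeasure {t // t ∈ B mr.1}).prod ν).map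
        (fun q => shuffledCopies tile q.1 q.2 ∘ τ) =
      ((Measure.pi fun mr : Fin M × Fin R => uniformPermMeasure {t // t ∈ B mr.1}).prod ν).map
        (fun q => shuffledCopies tile q.1 q.2) := by
  have hskew := (measurePreserving_pi_uniformPermMeasure (reshuffleEquiv τ)).skew_product
    (g := fun g x => tileAct tile (shuffleTuple g (τ 0)) x)
    (measurable_from_prod_countable_right fun g => measurable_tileAct (shuffleTuple g (τ 0)))
    (ae_of_all _ fun _ => hν _)
  conv_rhs => rw [← hskew.map_eq, Measure.map_map measurable_shuffledCopies hskew.measurable]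
  congr 1
  funext q
  exact hT.shuffledCopies_comp τ q.1 q.2

theorem map_perm_eq_of_eq_shuffledCopies {R : ℕ} {Ω : Type*} [MeasurableSpace Ω]
    {μ : Measure Ω} {W : Fin (R + 1) → Ω → Fin T → Fin p → ℝ} {g : Ω → Shuffles B R}
    {x : Ω → Fin T → Fin p → ℝ} (hg : Measurable g) (hx : Measurable x)
    {ν : Measure (Fin T → Fin p → ℝ)} [SFinite ν]
    (hν : ∀ γ : ∀ m, Perm {t // t ∈ B m}, ν.map (tileAct tile γ) = ν)
    (hlaw : μ.map (fun ω => (g ω, x ω)) =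
      (Measure.pi fun mr : Fin M × Fin R => uniformPermMeasure {t // t ∈ B mr.1}).prod ν)
    (hW : ∀ ω, (fun r => W r ω) = shuffledCopies tile (g ω) (x ω)) (τ : Perm (Fin (R + 1))) :
    μ.map (fun ω r => W (τ r) ω) = μ.map (fun ω r => W r ω) := by
  have hpair := hg.prodMk hx
  have hcopies : Measurable fun q : Shuffles B R × (Fin T → Fin p → ℝ) =>
      shuffledCopies tile q.1 q.2 ∘ τ :=
    (measurable_pi_lambda _ fun r => measurable_pi_apply (τ r)).comp measurable_shuffledCopies
  calc μ.map (fun ω r => W (τ r) ω)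
      = (μ.map fun ω => (g ω, x ω)).map fun q => shuffledCopies tile q.1 q.2 ∘ τ := by
        rw [Measure.map_map hcopies hpair]
        congr 1
        funext ω
        exact congrArg (· ∘ τ) (hW ω)
    _ = (μ.map fun ω => (g ω, x ω)).map fun q => shuffledCopies tile q.1 q.2 := by
        rw [hlaw, hT.map_shuffledCopies_comp_eq hν τ]
    _ = μ.map (fun ω r => W r ω) := by
        rw [Measure.map_map measurable_shuffledCopies hpair]
        congr 1
        funext ω
        exact (hW ω).symm

end IsTiling

end Mosaic

/-- For a deterministic tiling `{(B m, G m)}` of `[T] × [p]`, a random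
matrix `ε` satisfying `H₀` (jointly independent columns) and local exchangeability with
respect to the tiling, and deterministic matrices `H m`, the mosaic residual matrix `ε̂`
(with `ε̂_{B_m,G_m} = ε_(m) H_m`) together with its `R` within-tile-permuted variants
`ε̃⁽¹⁾, …, ε̃⁽ᴿ⁾` (using i.i.d. uniformly random within-tile row permutations independent
of `ε`) form an exchangeable tuple. -/
theorem mosaic_residual_tuple_exchangeable
    {Ω : Type*} [MeasurableSpace Ω] (μ : Measure Ω) [IsProbabilityMeasure μ]
    (T p M R : ℕ) (ε : Ω → Fin T → Fin p → ℝ) (hmeas : Measurable ε)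
    -- the tiling: every `(t, j)` lies in exactly one rectangle `B m × G m`,
    -- namely the one indexed by `tile t j`:
    (B : Fin M → Finset (Fin T)) (G : Fin M → Finset (Fin p))
    (tile : Fin T → Fin p → Fin M)
    (hB : ∀ t j, t ∈ B (tile t j)) (hG : ∀ t j, j ∈ G (tile t j))
    (huniq : ∀ m t j, t ∈ B m → j ∈ G m → m = tile t j)
    -- `H₀`: the columns of `ε` are jointly independent:
    (hcol_indep : iIndepFun (fun j ω => fun t => ε ω t j) μ)
    -- local exchangeability of `ε` with respect to the tiling:
    (hlocexch : ∀ (j : Fin p) (π : Equiv.Perm (Fin T)), (∀ t, tile (π t) j = tile t j) →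
      Measure.map (fun ω => fun t => ε ω (π t) j) μ =
        Measure.map (fun ω => fun t => ε ω t j) μ)
    -- deterministic matrices `H m ∈ ℝ^{|G m| × |G m|}` and mosaic residuals
    -- `ε̂_{B_m, G_m} := ε_(m) H_m`:
    (H : (m : Fin M) → Matrix {j : Fin p // j ∈ G m} {j : Fin p // j ∈ G m} ℝ)
    (εh : Ω → Fin T → Fin p → ℝ)
    (hεh : ∀ ω t j, εh ω t j =
      ∑ j' : {x : Fin p // x ∈ G (tile t j)}, ε ω t j'.1 * H (tile t j) j' ⟨j, hG t j⟩)
    -- the i.i.d. uniformly random within-tile row permutations, independent of `ε`: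
    (π : (m : Fin M) → Fin R → Ω → Equiv.Perm {t : Fin T // t ∈ B m})
    (hπmeas : ∀ m r, Measurable (π m r))
    (hπ : Measure.map (fun ω => ((fun mr : Fin M × Fin R => π mr.1 mr.2 ω), ε ω)) μ =
      (Measure.pi fun mr : Fin M × Fin R =>
        uniformPermMeasure {t : Fin T // t ∈ B mr.1}).prod (Measure.map ε μ))
    -- the tuple `(ε̂, ε̃⁽¹⁾, …, ε̃⁽ᴿ⁾)`:
    (W : Fin (R + 1) → Ω → Fin T → Fin p → ℝ)
    (hW0 : ∀ ω, W 0 ω = εh ω)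
    (hWr : ∀ (r : Fin R) ω, W r.succ ω =
      fun t j => εh ω (π (tile t j) r ω ⟨t, hB t j⟩).1 j) :
    ∀ τ : Equiv.Perm (Fin (R + 1)),
      Measure.map (fun ω => fun r => W (τ r) ω) μ =
        Measure.map (fun ω => fun r => W r ω) μ := by
  intro τ
  have hT : Mosaic.IsTiling B G tile := ⟨hB, hG, huniq⟩
  have hF := hT.measurable_mosaicResidual H
  have hεh_eq : εh = hT.mosaicResidual H ∘ ε := funext fun ω => funext fun t => funext (hεh ω t)
  have hperms : Measurable fun ω (mr : Fin M × Fin R) => π mr.1 mr.2 ω :=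
    measurable_pi_lambda _ fun mr => hπmeas mr.1 mr.2
  refine hT.map_perm_eq_of_eq_shuffledCopies hperms (hεh_eq ▸ hF.comp hmeas)
    (hT.map_mosaicResidual_tileAct_eq H (hT.map_tileAct_eq hmeas hcol_indep hlocexch)) ?_
    (fun ω => Mosaic.eq_shuffledCopies hB (hW0 ω) (hWr · ω)) τ
  rw [hεh_eq]
  exact Measure.map_prodMk_comp_right hperms hmeas hF hπ
end

section
/- Let {(B_m,G_m)}_{m=1}^M be a deterministic tiling of [T]×[p], let ε ∈ R^{T×p} satisfy H_0 (jointly independent columns) and local exchangeability with respect to the tiling, and let H_m ∈ R^{|G_m|×|G_m|} be deterministic matrices. Define the mosaic tile residuals ε̂_{(m)} := ε_{(m)} H_m for m ∈ [M]. Then for all deterministic permutation matrices P_1 ∈ R^{|B_1|×|B_1|},…,P_M ∈ R^{|B_M|×|B_M|}, the tuple (ε̂_{(1)},…,ε̂_{(M)}) has the same joint distribution as (P_1 ε̂_{(1)},…,P_M ε̂_{(M)}). -/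
/-!
Permuting the rows of every tile by `σ` acts on each column `j` as a permutation `π j` of the
rows that maps each tile met by column `j` to itself. Local exchangeability makes the law of
every column invariant under its `π j`, and independence of the columns upgrades this to
invariance of the law of the whole matrix under the column-wise permutation. The residual tiles
are a fixed measurable function of `ε`, and the permuted residual tiles are the same function
of the column-wise permuted matrix.
-/

open MeasureTheory ProbabilityTheory

theorem ProbabilityTheory.iIndepFun.map_fun_eq_of_map_eq {Ω ι : Type*} [Fintype ι]
    [MeasurableSpace Ω] {μ : Measure Ω} {β : ι → Type*} [∀ i, MeasurableSpace (β i)]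
    {f g : ∀ i, Ω → β i} (hf : iIndepFun f μ) (hg : iIndepFun g μ)
    (hfm : ∀ i, AEMeasurable (f i) μ) (hgm : ∀ i, AEMeasurable (g i) μ)
    (h : ∀ i, μ.map (f i) = μ.map (g i)) :
    μ.map (fun ω i => f i ω) = μ.map (fun ω i => g i ω) := by
  rw [hf.map_fun_eq_pi_map hfm, hg.map_fun_eq_pi_map hgm, funext h]

theorem map_columnwise_perm_eq_of_iIndepFun {Ω T ι E : Type*} [Fintype ι] [MeasurableSpace Ω]
    [MeasurableSpace E] {μ : Measure Ω} {ε : Ω → T → ι → E} (hε : Measurable ε)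
    (hindep : iIndepFun (fun j ω t => ε ω t j) μ) (π : ι → Equiv.Perm T)
    (hπ : ∀ j, μ.map (fun ω t => ε ω (π j t) j) = μ.map (fun ω t => ε ω t j)) :
    μ.map (fun ω t j => ε ω (π j t) j) = μ.map ε := by
  have hcols : μ.map (fun ω j t => ε ω (π j t) j) = μ.map (fun ω j t => ε ω t j) := by
    refine iIndepFun.map_fun_eq_of_map_eq ?_ hindep
      (fun _ => (by fun_prop : Measurable _).aemeasurable)
      (fun _ => (by fun_prop : Measurable _).aemeasurable) hπ
    exact hindep.comp (fun j c t => c (π j t)) fun _ => by fun_prop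
  have hswap : Measurable (Function.swap : (ι → T → E) → T → ι → E) := by fun_prop
  calc μ.map (fun ω t j => ε ω (π j t) j)
      = (μ.map (fun ω j t => ε ω (π j t) j)).map Function.swap := by
        rw [Measure.map_map hswap (by fun_prop)]; rfl
    _ = (μ.map (fun ω j t => ε ω t j)).map Function.swap := by rw [hcols]
    _ = μ.map ε := by rw [Measure.map_map hswap (by fun_prop)]; rfl

structure IsTiling_s17 {α β κ : Type*} (B : κ → Finset α) (G : κ → Finset β) (tile : α → β → κ) :
    Prop where
  mem_rows : ∀ a b, a ∈ B (tile a b)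
  mem_cols : ∀ a b, b ∈ G (tile a b)
  eq_tile : ∀ k a b, a ∈ B k → b ∈ G k → k = tile a b

namespace IsTiling_s17

variable {α β κ : Type*} {B : κ → Finset α} {G : κ → Finset β} {tile : α → β → κ}

theorem tile_eq_iff_of_mem (hT : IsTiling_s17 B G tile) {a a' : α} {b : β} {k : κ} (ha : a ∈ B k)
    (ha' : a' ∈ B k) : tile a b = k ↔ tile a' b = k :=
  ⟨fun h => (hT.eq_tile k a' b ha' (h ▸ hT.mem_cols a b)).symm,
    fun h => (hT.eq_tile k a b ha (h ▸ hT.mem_cols a' b)).symm⟩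

-- The fibre of `tile · b` over `k` is the part of `B k` that `σ k` preserves: all of `B k` when
-- `b ∈ G k`, and empty otherwise.
def columnPerm (hT : IsTiling_s17 B G tile) (σ : ∀ k, Equiv.Perm {a // a ∈ B k}) (b : β) :
    Equiv.Perm α :=
  Equiv.ofFiberEquiv fun k =>
    (Equiv.subtypeSubtypeEquivSubtype fun h => h ▸ hT.mem_rows _ b).permCongr
      ((σ k).subtypePerm fun a => hT.tile_eq_iff_of_mem (σ k a).2 a.2)

theorem tile_columnPerm (hT : IsTiling_s17 B G tile) (σ : ∀ k, Equiv.Perm {a // a ∈ B k}) (a : α)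
    (b : β) : tile (hT.columnPerm σ b a) b = tile a b :=
  Equiv.ofFiberEquiv_map (f := (tile · b)) (g := (tile · b)) _ a

theorem columnPerm_apply_of_mem (hT : IsTiling_s17 B G tile) (σ : ∀ k, Equiv.Perm {a // a ∈ B k})
    {a : α} {b : β} {k : κ} (ha : a ∈ B k) (hb : b ∈ G k) :
    hT.columnPerm σ b a = σ k ⟨a, ha⟩ := by
  obtain rfl := hT.eq_tile k a b ha hb
  rfl

end IsTiling_s17

theorem mosaic_tile_residuals_within_tile_permutation_invariance_general
    {Ω : Type*} [MeasurableSpace Ω] (μ : Measure Ω)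
    (T p M : ℕ) (ε : Ω → Fin T → Fin p → ℝ) (hmeas : Measurable ε)
    -- the tiling: every `(t, j)` lies in exactly one rectangle `B m × G m`,
    -- namely the one indexed by `tile t j`:
    (B : Fin M → Finset (Fin T)) (G : Fin M → Finset (Fin p))
    (tile : Fin T → Fin p → Fin M)
    (hB : ∀ t j, t ∈ B (tile t j)) (hG : ∀ t j, j ∈ G (tile t j))
    (huniq : ∀ m t j, t ∈ B m → j ∈ G m → m = tile t j)
    -- `H₀`: the columns of `ε` are jointly independent:
    (hcol_indep : iIndepFun (fun j ω => fun t => ε ω t j) μ)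
    -- local exchangeability of `ε` with respect to the tiling:
    (hlocexch : ∀ (j : Fin p) (π : Equiv.Perm (Fin T)), (∀ t, tile (π t) j = tile t j) →
      Measure.map (fun ω => fun t => ε ω (π t) j) μ =
        Measure.map (fun ω => fun t => ε ω t j) μ)
    -- deterministic matrices `H m` and the mosaic tile residuals `ε̂_(m) := ε_(m) H_m`:
    (H : (m : Fin M) → Matrix {j : Fin p // j ∈ G m} {j : Fin p // j ∈ G m} ℝ)
    (εh : (m : Fin M) → Ω → {t : Fin T // t ∈ B m} → {j : Fin p // j ∈ G m} → ℝ)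
    (hεh : ∀ m ω t j, εh m ω t j = ∑ j' : {x : Fin p // x ∈ G m}, ε ω t.1 j'.1 * H m j' j) :
    ∀ σ : (m : Fin M) → Equiv.Perm {t : Fin T // t ∈ B m},
      Measure.map (fun ω => fun (m : Fin M) => fun t j => εh m ω t j) μ =
      Measure.map (fun ω => fun (m : Fin M) => fun t j => εh m ω (σ m t) j) μ := by
  intro σ
  have hT : IsTiling_s17 B G tile := ⟨hB, hG, huniq⟩
  let π := hT.columnPerm σ
  let residuals : (Fin T → Fin p → ℝ) → ∀ m, {t // t ∈ B m} → {j // j ∈ G m} → ℝ :=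
    fun x m t j => ∑ j' : G m, x t j' * H m j' j
  have hresiduals : Measurable residuals := by fun_prop
  have hlaw : μ.map (fun ω t j => ε ω (π j t) j) = μ.map ε :=
    map_columnwise_perm_eq_of_iIndepFun hmeas hcol_indep π fun j => hlocexch j (π j) fun t =>
      hT.tile_columnPerm σ t j
  have hεh_perm : (fun ω m t j => εh m ω (σ m t) j) =
      residuals ∘ fun ω t j => ε ω (π j t) j := by
    ext ω m t j
    simp only [hεh, Function.comp_apply, residuals]
    exact Finset.sum_congr rfl fun j' _ => by rw [hT.columnPerm_apply_of_mem σ t.2 j'.2]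
  have hεh_id : (fun ω m t j => εh m ω t j) = residuals ∘ ε := by
    ext ω m t j
    simp only [hεh, Function.comp_apply, residuals]
  rw [hεh_perm, hεh_id, ← Measure.map_map hresiduals hmeas,
    ← Measure.map_map hresiduals (by fun_prop), hlaw]

/-- For a deterministic tiling `{(B m, G m)}` of `[T] × [p]`, a random
matrix `ε` whose columns are jointly independent (`H₀`) and which is locally exchangeable with
respect to the tiling, and deterministic matrices `H m ∈ ℝ^{|G m| × |G m|}`, the mosaic tile
residuals `ε̂_(m) := ε_(m) H_m` satisfy
`(ε̂_(1), …, ε̂_(M)) ≍ (P₁ ε̂_(1), …, P_M ε̂_(M))` for all deterministic permutation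
matrices `P m` (encoded as within-tile row permutations `σ m`). -/
theorem mosaic_tile_residuals_within_tile_permutation_invariance
    {Ω : Type*} [MeasurableSpace Ω] (μ : Measure Ω) [IsProbabilityMeasure μ]
    (T p M : ℕ) (ε : Ω → Fin T → Fin p → ℝ) (hmeas : Measurable ε)
    -- the tiling: every `(t, j)` lies in exactly one rectangle `B m × G m`,
    -- namely the one indexed by `tile t j`:
    (B : Fin M → Finset (Fin T)) (G : Fin M → Finset (Fin p))
    (tile : Fin T → Fin p → Fin M)
    (hB : ∀ t j, t ∈ B (tile t j)) (hG : ∀ t j, j ∈ G (tile t j))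
    (huniq : ∀ m t j, t ∈ B m → j ∈ G m → m = tile t j)
    -- `H₀`: the columns of `ε` are jointly independent:
    (hcol_indep : iIndepFun (fun j ω => fun t => ε ω t j) μ)
    -- local exchangeability of `ε` with respect to the tiling:
    (hlocexch : ∀ (j : Fin p) (π : Equiv.Perm (Fin T)), (∀ t, tile (π t) j = tile t j) →
      Measure.map (fun ω => fun t => ε ω (π t) j) μ =
        Measure.map (fun ω => fun t => ε ω t j) μ)
    -- deterministic matrices `H m` and the mosaic tile residuals `ε̂_(m) := ε_(m) H_m`:
    (H : (m : Fin M) → Matrix {j : Fin p // j ∈ G m} {j : Fin p // j ∈ G m} ℝ)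
    (εh : (m : Fin M) → Ω → {t : Fin T // t ∈ B m} → {j : Fin p // j ∈ G m} → ℝ)
    (hεh : ∀ m ω t j, εh m ω t j = ∑ j' : {x : Fin p // x ∈ G m}, ε ω t.1 j'.1 * H m j' j) :
    ∀ σ : (m : Fin M) → Equiv.Perm {t : Fin T // t ∈ B m},
      Measure.map (fun ω => fun (m : Fin M) => fun t j => εh m ω t j) μ =
      Measure.map (fun ω => fun (m : Fin M) => fun t j => εh m ω (σ m t) j) μ :=
  mosaic_tile_residuals_within_tile_permutation_invariance_general μ T p M ε hmeas B G tile hB hG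
    huniq hcol_indep hlocexch H εh hεh
end
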